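/- arXiv:1110.5543 — 3 statements merged into one kernel-verified Lean document; each statement's English description precedes it below -/
import Mathlib

section
/- Let ⟨A,B⟩ be a pairing of regular multiplier Hopf algebras A and B over a field K. The map R: B⊗A → A⊗B defined by R(b⊗a) = b_(1)▶a ⊗ b_(2) is bijective with inverse R^{-1}(a⊗b) = b_(2) ⊗ S^{-1}(b_(1))▶a; consequently the Heisenberg double product (a#b)(a'#b') = a(b_(1)▶a') # b_(2)b' on A⊗B is a non-degenerate associative product. -/
open TensorProduct LinearMap
open scoped TensorProduct

/-! ## A framework for (an algebraic model of) regular multiplier Hopf algebras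

A regular multiplier Hopf algebra `(A, Δ)` is a non-degenerate (possibly non-unital)
algebra `A` together with a coassociative comultiplication (here modelled as a map
`A →ₗ[K] A ⊗[K] A`), such that the canonical maps `T₁ : a ⊗ b ↦ Δ(a)(1 ⊗ b)` and
`T₂ : a ⊗ b ↦ (a ⊗ 1)Δ(b)` are bijective; regularity is encoded by the bijectivity of
the antipode.  The counit and antipode axioms are stated in their "covered"
(multiplied) form, as appropriate for non-unital algebras. -/
structure RegularMultiplierHopf (K : Type) [Field K]
    (A : Type) [NonUnitalRing A] [Module K A] [SMulCommClass K A A] [IsScalarTower K A A] :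
    Type where
  comul : A →ₗ[K] A ⊗[K] A
  counit : A →ₗ[K] K
  antipode : A ≃ₗ[K] A
  mul_nondeg_left : ∀ a : A, (∀ x : A, a * x = 0) → a = 0
  mul_nondeg_right : ∀ a : A, (∀ x : A, x * a = 0) → a = 0
  comul_mul : ∀ a b : A, comul (a * b) = comul a * comul b
  coassoc : ∀ a : A,
    (TensorProduct.assoc K A A A) ((LinearMap.rTensor A comul) (comul a))
      = (LinearMap.lTensor A comul) (comul a)
  counit_left : ∀ a : A, (TensorProduct.lid K A) ((LinearMap.rTensor A counit) (comul a)) = a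
  counit_right : ∀ a : A, (TensorProduct.rid K A) ((LinearMap.lTensor A counit) (comul a)) = a
  counit_mul : ∀ a b : A, counit (a * b) = counit a * counit b
  antipode_mul_left : ∀ a x : A,
    (LinearMap.mul' K A) ((LinearMap.rTensor A antipode.toLinearMap) (comul a)) * x
      = counit a • x
  antipode_mul_right : ∀ a x : A,
    x * (LinearMap.mul' K A) ((LinearMap.lTensor A antipode.toLinearMap) (comul a))
      = counit a • x
  T1_bijective : Function.Bijective fun z : A ⊗[K] A =>
    (LinearMap.lTensor A (LinearMap.mul' K A))
      ((TensorProduct.assoc K A A A) ((LinearMap.rTensor A comul) z))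
  T2_bijective : Function.Bijective fun z : A ⊗[K] A =>
    (LinearMap.rTensor A (LinearMap.mul' K A))
      ((TensorProduct.assoc K A A A).symm ((LinearMap.lTensor A comul) z))

namespace RegularMultiplierHopf

variable {K : Type} [Field K]
variable {A : Type} [NonUnitalRing A] [Module K A] [SMulCommClass K A A] [IsScalarTower K A A]

/-- The iterated comultiplication `a ↦ a₍₁₎ ⊗ (a₍₂₎ ⊗ a₍₃₎)`. -/
noncomputable def comul2 (h : RegularMultiplierHopf K A) : A →ₗ[K] A ⊗[K] (A ⊗[K] A) :=
  (LinearMap.lTensor A h.comul) ∘ₗ h.comul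

end RegularMultiplierHopf

/-- A pairing `⟨A, B⟩` of regular multiplier Hopf algebras: a non-degenerate bilinear
form for which the product of each algebra is dual to the comultiplication of the
other one, compatible with the antipodes.  The duality conditions are expressed via
arbitrary finite Sweedler expansions of the comultiplications. -/
structure MHAPairing (K : Type) [Field K]
    (A : Type) [NonUnitalRing A] [Module K A] [SMulCommClass K A A] [IsScalarTower K A A]
    (B : Type) [NonUnitalRing B] [Module K B] [SMulCommClass K B B] [IsScalarTower K B B]
    (hA : RegularMultiplierHopf K A) (hB : RegularMultiplierHopf K B) : Type where
  pair : A →ₗ[K] B →ₗ[K] K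
  nondeg_left : ∀ a : A, (∀ b : B, pair a b = 0) → a = 0
  nondeg_right : ∀ b : B, (∀ a : A, pair a b = 0) → b = 0
  pair_mul_comul : ∀ (a a' : A) (b : B) (s : Finset ℕ) (b1 b2 : ℕ → B),
    hB.comul b = ∑ i ∈ s, b1 i ⊗ₜ[K] b2 i →
    pair (a * a') b = ∑ i ∈ s, pair a (b1 i) * pair a' (b2 i)
  pair_comul_mul : ∀ (a : A) (b b' : B) (s : Finset ℕ) (a1 a2 : ℕ → A),
    hA.comul a = ∑ i ∈ s, a1 i ⊗ₜ[K] a2 i →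
    pair a (b * b') = ∑ i ∈ s, pair (a1 i) b * pair (a2 i) b'
  pair_antipode : ∀ (a : A) (b : B), pair (hA.antipode a) b = pair a (hB.antipode b)

namespace MHAPairing

variable {K : Type} [Field K]
variable {A : Type} [NonUnitalRing A] [Module K A] [SMulCommClass K A A] [IsScalarTower K A A]
variable {B : Type} [NonUnitalRing B] [Module K B] [SMulCommClass K B B] [IsScalarTower K B B]
variable {hA : RegularMultiplierHopf K A} {hB : RegularMultiplierHopf K B}

/-- `b ▶ a = ⟨a₍₂₎, b⟩ a₍₁₎`, the left regular action of `B` on `A`. -/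
noncomputable def lact (P : MHAPairing K A B hA hB) (b : B) (a : A) : A :=
  (TensorProduct.rid K A) ((LinearMap.lTensor A (P.pair.flip b)) (hA.comul a))

/-- `a ◀ b = ⟨a₍₁₎, b⟩ a₍₂₎`, the right regular action of `B` on `A`. -/
noncomputable def ract (P : MHAPairing K A B hA hB) (a : A) (b : B) : A :=
  (TensorProduct.lid K A) ((LinearMap.rTensor A (P.pair.flip b)) (hA.comul a))

/-- `a ▶ b = ⟨a, b₍₂₎⟩ b₍₁₎`, the left regular action of `A` on `B`. -/
noncomputable def lactB (P : MHAPairing K A B hA hB) (a : A) (b : B) : B :=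
  (TensorProduct.rid K B) ((LinearMap.lTensor B (P.pair a)) (hB.comul b))

/-- `b ◀ a = ⟨a, b₍₁₎⟩ b₍₂₎`, the right regular action of `A` on `B`. -/
noncomputable def ractB (P : MHAPairing K A B hA hB) (b : B) (a : A) : B :=
  (TensorProduct.lid K B) ((LinearMap.rTensor B (P.pair a)) (hB.comul b))

end MHAPairing

/-!
Everything is tested against the pairing. Since `⟨b ▶ a, c⟩ = ⟨a, c b⟩`, the map `▶` is an
action of `B` with `b ▶ (a a') = (b₍₁₎ ▶ a)(b₍₂₎ ▶ a')`. With coassociativity of `Δ_B`,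
`R⁻¹ R = id` and `R R⁻¹ = id` reduce to `∑ S⁻¹(c₍₂₎) c₍₁₎ = ε(c) = ∑ c₍₂₎ S⁻¹(c₍₁₎)` (in covered
form, a consequence of the antimultiplicativity of `S`), and associativity reduces to the
multiplicativity of `▶`.

For non-degeneracy, pairing `x (a' # b')` with `q ⊗ p` gives the pairing of
`(id ⊗ (p ◀ ·)) T₂ ((q ◀ ·) ⊗ id) x` with `a' ⊗ b'`. The regular actions are faithful, `T₂` is
injective, and over a field tensors are separated by separating families of maps on one factor,
so `x (a' # b') = 0` for all `a', b'` forces `x = 0`. Right multiplication is handled the same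
way with `T₁`.
-/

namespace TensorProduct

theorem exists_nat_sum_tmul_eq {R M N : Type*} [CommSemiring R] [AddCommMonoid M]
    [Module R M] [AddCommMonoid N] [Module R N] (x : M ⊗[R] N) :
    ∃ (s : Finset ℕ) (m : ℕ → M) (n : ℕ → N), x = ∑ i ∈ s, m i ⊗ₜ[R] n i := by
  obtain ⟨k, m, n, rfl⟩ := exists_sum_tmul_eq x
  refine ⟨Finset.range k, fun i => if h : i < k then m ⟨i, h⟩ else 0,
    fun i => if h : i < k then n ⟨i, h⟩ else 0, ?_⟩
  simp [Finset.sum_range]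

section Separation

variable {R U V W : Type*} [CommRing R] [AddCommGroup U] [Module R U]
  [AddCommGroup V] [Module R V] [AddCommGroup W] [Module R W]

theorem eq_zero_of_forall_rTensor_eq_zero [Module.Free R V] {ι : Type*} (F : ι → U →ₗ[R] W)
    (hF : ∀ u, (∀ i, F i u = 0) → u = 0) (t : U ⊗[R] V)
    (ht : ∀ i, (F i).rTensor V t = 0) : t = 0 := by
  let 𝒞 := Module.Free.chooseBasis R V
  obtain ⟨c, rfl⟩ := eq_repr_basis_right 𝒞 t
  suffices c = 0 by simp [this]
  ext k
  refine hF _ fun i => ?_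
  have := sum_tmul_basis_right_eq_zero 𝒞 (c.mapRange (F i) (map_zero _)) ?_
  · simpa using DFunLike.congr_fun this k
  · rw [Finsupp.sum_mapRange_index (by simp), ← ht i, Finsupp.sum, Finsupp.sum, map_sum]
    simp

theorem eq_zero_of_forall_lTensor_eq_zero [Module.Free R U] {ι : Type*} (G : ι → V →ₗ[R] W)
    (hG : ∀ v, (∀ i, G i v = 0) → v = 0) (t : U ⊗[R] V)
    (ht : ∀ i, (G i).lTensor U t = 0) : t = 0 := by
  refine (TensorProduct.comm R U V).map_eq_zero_iff.mp
    (eq_zero_of_forall_rTensor_eq_zero G hG _ fun i => ?_)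
  rw [LinearMap.rTensor_comm, ht i, map_zero]

theorem eq_zero_of_forall_dualDistrib_eq_zero [Module.Free R V] {ι κ : Type*}
    (f : ι → Module.Dual R U) (g : κ → Module.Dual R V)
    (hf : ∀ u, (∀ i, f i u = 0) → u = 0) (hg : ∀ v, (∀ j, g j v = 0) → v = 0)
    (t : U ⊗[R] V) (ht : ∀ i j, dualDistrib R U V (f i ⊗ₜ g j) t = 0) : t = 0 := by
  refine eq_zero_of_forall_rTensor_eq_zero f hf t fun i =>
    eq_zero_of_forall_lTensor_eq_zero g hg _ fun j => ?_
  have hev : ∀ t : U ⊗[R] V, dualDistrib R U V (f i ⊗ₜ g j) t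
      = TensorProduct.lid R R ((g j).lTensor R ((f i).rTensor V t)) := by
    intro t
    induction t with
    | zero => simp
    | tmul u v => simp
    | add t t' ht ht' => simp only [map_add, ht, ht']
  rw [← (TensorProduct.lid R R).map_eq_zero_iff, ← hev, ht]

end Separation

end TensorProduct

namespace RegularMultiplierHopf

variable {K : Type} [Field K]
variable {A : Type} [NonUnitalRing A] [Module K A] [SMulCommClass K A A] [IsScalarTower K A A]
variable (h : RegularMultiplierHopf K A)

noncomputable def sweedler (a : A) : Finset (A × A) :=
  (TensorProduct.exists_finset (h.comul a)).choose

theorem comul_eq_sum_sweedler (a : A) :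
    h.comul a = ∑ p ∈ h.sweedler a, p.1 ⊗ₜ[K] p.2 :=
  (TensorProduct.exists_finset (h.comul a)).choose_spec

noncomputable def T₁ : A ⊗[K] A →ₗ[K] A ⊗[K] A :=
  LinearMap.lTensor A (LinearMap.mul' K A) ∘ₗ (TensorProduct.assoc K A A A).toLinearMap ∘ₗ
    LinearMap.rTensor A h.comul

noncomputable def T₂ : A ⊗[K] A →ₗ[K] A ⊗[K] A :=
  LinearMap.rTensor A (LinearMap.mul' K A) ∘ₗ (TensorProduct.assoc K A A A).symm.toLinearMap ∘ₗ
    LinearMap.lTensor A h.comul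

theorem T₁_injective : Function.Injective h.T₁ := h.T1_bijective.injective

theorem T₂_injective : Function.Injective h.T₂ := h.T2_bijective.injective

section Expansion

variable {h} {ι : Type*} {s : Finset ι} {c1 c2 : ι → A} {c : A}

theorem sum_counit_smul_left (hc : h.comul c = ∑ i ∈ s, c1 i ⊗ₜ[K] c2 i) :
    ∑ i ∈ s, h.counit (c1 i) • c2 i = c := by
  simpa [hc, map_sum] using h.counit_left c

theorem sum_counit_smul_right (hc : h.comul c = ∑ i ∈ s, c1 i ⊗ₜ[K] c2 i) :
    ∑ i ∈ s, h.counit (c2 i) • c1 i = c := by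
  simpa [hc, map_sum] using h.counit_right c

theorem sum_counit_smul_antipode (hc : h.comul c = ∑ i ∈ s, c1 i ⊗ₜ[K] c2 i) :
    ∑ i ∈ s, h.counit (c1 i) • h.antipode (c2 i) = h.antipode c := by
  conv_rhs => rw [← sum_counit_smul_left hc]
  simp only [map_sum, map_smul]

theorem sum_antipode_mul_mul (hc : h.comul c = ∑ i ∈ s, c1 i ⊗ₜ[K] c2 i) (x : A) :
    (∑ i ∈ s, h.antipode (c1 i) * c2 i) * x = h.counit c • x := by
  simpa [hc, map_sum] using h.antipode_mul_left c x

theorem mul_sum_mul_antipode (hc : h.comul c = ∑ i ∈ s, c1 i ⊗ₜ[K] c2 i) (x : A) :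
    x * ∑ i ∈ s, c1 i * h.antipode (c2 i) = h.counit c • x := by
  simpa [hc, map_sum] using h.antipode_mul_right c x

theorem comul_mul_eq_sum {κ : Type*} {t : Finset κ} {d1 d2 : κ → A} {d : A}
    (hc : h.comul c = ∑ i ∈ s, c1 i ⊗ₜ[K] c2 i) (hd : h.comul d = ∑ j ∈ t, d1 j ⊗ₜ[K] d2 j) :
    h.comul (c * d) = ∑ p ∈ s ×ˢ t, (c1 p.1 * d1 p.2) ⊗ₜ[K] (c2 p.1 * d2 p.2) := by
  rw [h.comul_mul, hc, hd, Finset.sum_mul_sum, Finset.sum_product]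
  simp [Algebra.TensorProduct.tmul_mul_tmul]

theorem T₁_tmul (hc : h.comul c = ∑ i ∈ s, c1 i ⊗ₜ[K] c2 i) (w : A) :
    h.T₁ (c ⊗ₜ[K] w) = ∑ i ∈ s, c1 i ⊗ₜ[K] (c2 i * w) := by
  simp [T₁, hc, TensorProduct.sum_tmul]

theorem T₂_tmul (hc : h.comul c = ∑ i ∈ s, c1 i ⊗ₜ[K] c2 i) (w : A) :
    h.T₂ (w ⊗ₜ[K] c) = ∑ i ∈ s, (w * c1 i) ⊗ₜ[K] c2 i := by
  simp [T₂, hc, TensorProduct.tmul_sum]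

end Expansion

theorem coassoc_sum {X : Type*} [AddCommGroup X] [Module K X]
    (Φ : A ⊗[K] (A ⊗[K] A) →ₗ[K] X) (a : A) :
    ∑ p ∈ h.sweedler a, ∑ q ∈ h.sweedler p.1, Φ (q.1 ⊗ₜ[K] (q.2 ⊗ₜ[K] p.2))
      = ∑ p ∈ h.sweedler a, ∑ q ∈ h.sweedler p.2, Φ (p.1 ⊗ₜ[K] (q.1 ⊗ₜ[K] q.2)) := by
  have := congrArg Φ (h.coassoc a)
  simp only [comul_eq_sum_sweedler h a, map_sum, LinearMap.rTensor_tmul,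
    LinearMap.lTensor_tmul, comul_eq_sum_sweedler h _, TensorProduct.sum_tmul,
    TensorProduct.tmul_sum, TensorProduct.assoc_tmul] at this
  exact this

theorem sum_antipode_mul_mul_mul_antipode (u v b : A) :
    ∑ p ∈ h.sweedler b, ∑ q ∈ h.sweedler p.1,
        h.antipode (u * q.1) * (v * q.2) * h.antipode p.2
      = h.antipode (u * b) * v := by
  -- `Φ (x ⊗ (y ⊗ z)) = S(u x) (v y) S(z)`
  let Φ : A ⊗[K] (A ⊗[K] A) →ₗ[K] A :=
    LinearMap.mul' K A ∘ₗ TensorProduct.map (LinearMap.mul' K A ∘ₗ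
      TensorProduct.map (h.antipode.toLinearMap ∘ₗ LinearMap.mulLeft K u)
        (LinearMap.mulLeft K v)) h.antipode.toLinearMap ∘ₗ
      (TensorProduct.assoc K A A A).symm.toLinearMap
  have := h.coassoc_sum Φ b
  simp only [Φ, LinearMap.comp_apply, LinearEquiv.coe_coe, TensorProduct.assoc_symm_tmul,
    TensorProduct.map_tmul, LinearMap.mul'_apply, LinearMap.mulLeft_apply] at this
  rw [this]
  calc ∑ p ∈ h.sweedler b, ∑ q ∈ h.sweedler p.2,
        h.antipode (u * p.1) * (v * q.1) * h.antipode q.2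
      = ∑ p ∈ h.sweedler b, h.antipode (u * p.1) * (v * ∑ q ∈ h.sweedler p.2,
          q.1 * h.antipode q.2) := by
        simp only [Finset.mul_sum, mul_assoc]
    _ = h.antipode (u * ∑ p ∈ h.sweedler b, h.counit p.2 • p.1) * v := by
        simp only [mul_sum_mul_antipode (h.comul_eq_sum_sweedler _), Finset.mul_sum,
          map_sum, mul_smul_comm, map_smul, Finset.sum_mul, smul_mul_assoc]
    _ = h.antipode (u * b) * v := by
        rw [sum_counit_smul_right (h.comul_eq_sum_sweedler b)]

theorem sum_antipode_mul_mul_antipode (a b : A) :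
    ∑ p ∈ h.sweedler a, ∑ q ∈ h.sweedler p.1, h.antipode (q.1 * b) * q.2 * h.antipode p.2
      = h.antipode (a * b) := by
  -- `Φ (x ⊗ (y ⊗ z)) = S(x b) y S(z)`
  let Φ : A ⊗[K] (A ⊗[K] A) →ₗ[K] A :=
    LinearMap.mul' K A ∘ₗ TensorProduct.map (LinearMap.mul' K A ∘ₗ
      TensorProduct.map (h.antipode.toLinearMap ∘ₗ LinearMap.mulRight K b) LinearMap.id)
        h.antipode.toLinearMap ∘ₗ
      (TensorProduct.assoc K A A A).symm.toLinearMap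
  have := h.coassoc_sum Φ a
  simp only [Φ, LinearMap.comp_apply, LinearEquiv.coe_coe, TensorProduct.assoc_symm_tmul,
    TensorProduct.map_tmul, LinearMap.mul'_apply, LinearMap.mulRight_apply,
    LinearMap.id_apply] at this
  rw [this]
  calc ∑ p ∈ h.sweedler a, ∑ q ∈ h.sweedler p.2, h.antipode (p.1 * b) * q.1 * h.antipode q.2
      = ∑ p ∈ h.sweedler a, h.antipode (p.1 * b) * ∑ q ∈ h.sweedler p.2,
          q.1 * h.antipode q.2 := by
        simp only [Finset.mul_sum, mul_assoc]
    _ = h.antipode ((∑ p ∈ h.sweedler a, h.counit p.2 • p.1) * b) := by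
        simp only [mul_sum_mul_antipode (h.comul_eq_sum_sweedler _), Finset.sum_mul,
          map_sum, smul_mul_assoc, map_smul]
    _ = h.antipode (a * b) := by
        rw [sum_counit_smul_right (h.comul_eq_sum_sweedler a)]

theorem antipode_mul (a b : A) : h.antipode (a * b) = h.antipode b * h.antipode a := by
  -- both sides equal `∑ (S((a₍₁₎b₍₁₎)₍₁₎) (a₍₁₎b₍₁₎)₍₂₎) S(b₍₂₎) S(a₍₂₎)`
  calc h.antipode (a * b)
      = ∑ p ∈ h.sweedler a, ∑ q ∈ h.sweedler p.1, ∑ r ∈ h.sweedler b, ∑ t ∈ h.sweedler r.1,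
          h.antipode (q.1 * t.1) * (q.2 * t.2) * h.antipode r.2 * h.antipode p.2 := by
        rw [← h.sum_antipode_mul_mul_antipode a b]
        refine Finset.sum_congr rfl fun p _ => Finset.sum_congr rfl fun q _ => ?_
        rw [← h.sum_antipode_mul_mul_mul_antipode q.1 q.2 b]
        simp only [Finset.sum_mul]
    _ = ∑ p ∈ h.sweedler a, ∑ r ∈ h.sweedler b,
          (∑ t ∈ h.sweedler p.1 ×ˢ h.sweedler r.1,
            h.antipode (t.1.1 * t.2.1) * (t.1.2 * t.2.2)) *
              (h.antipode r.2 * h.antipode p.2) := by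
        refine Finset.sum_congr rfl fun p _ => ?_
        rw [Finset.sum_comm]
        refine Finset.sum_congr rfl fun r _ => ?_
        simp only [Finset.sum_product, Finset.sum_mul, mul_assoc]
    _ = ∑ p ∈ h.sweedler a, ∑ r ∈ h.sweedler b,
          (h.counit p.1 * h.counit r.1) • (h.antipode r.2 * h.antipode p.2) := by
        refine Finset.sum_congr rfl fun p _ => Finset.sum_congr rfl fun r _ => ?_
        rw [sum_antipode_mul_mul (comul_mul_eq_sum (h.comul_eq_sum_sweedler p.1)
          (h.comul_eq_sum_sweedler r.1)), h.counit_mul]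
    _ = h.antipode b * h.antipode a := by
        rw [← sum_counit_smul_antipode (h.comul_eq_sum_sweedler a),
          ← sum_counit_smul_antipode (h.comul_eq_sum_sweedler b), Finset.sum_mul_sum,
          Finset.sum_comm]
        refine Finset.sum_congr rfl fun r _ => Finset.sum_congr rfl fun p _ => ?_
        rw [smul_mul_smul_comm, mul_comm]

section AntipodeSymm

variable {h} {ι : Type*} {s : Finset ι} {c1 c2 : ι → A} {c : A}

theorem mul_sum_antipode_symm_mul (hc : h.comul c = ∑ i ∈ s, c1 i ⊗ₜ[K] c2 i) (z : A) :
    z * ∑ i ∈ s, h.antipode.symm (c2 i) * c1 i = h.counit c • z := by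
  apply h.antipode.injective
  simp only [antipode_mul, map_sum, LinearEquiv.apply_symm_apply, map_smul]
  exact sum_antipode_mul_mul hc _

theorem sum_mul_antipode_symm_mul (hc : h.comul c = ∑ i ∈ s, c1 i ⊗ₜ[K] c2 i) (w : A) :
    (∑ i ∈ s, c2 i * h.antipode.symm (c1 i)) * w = h.counit c • w := by
  apply h.antipode.injective
  simp only [antipode_mul, map_sum, LinearEquiv.apply_symm_apply, map_smul]
  exact mul_sum_mul_antipode hc _

theorem mul_sum_mul_antipode_symm (hc : h.comul c = ∑ i ∈ s, c1 i ⊗ₜ[K] c2 i) (z : A) :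
    z * ∑ i ∈ s, c2 i * h.antipode.symm (c1 i) = h.counit c • z := by
  rw [← sub_eq_zero]
  refine h.mul_nondeg_left _ fun w => ?_
  rw [sub_mul, mul_assoc, sum_mul_antipode_symm_mul hc, smul_mul_assoc, mul_smul_comm, sub_self]

end AntipodeSymm

end RegularMultiplierHopf

namespace MHAPairing

open RegularMultiplierHopf

variable {K : Type} [Field K]
variable {A : Type} [NonUnitalRing A] [Module K A] [SMulCommClass K A A] [IsScalarTower K A A]
variable {B : Type} [NonUnitalRing B] [Module K B] [SMulCommClass K B B] [IsScalarTower K B B]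
variable {hA : RegularMultiplierHopf K A} {hB : RegularMultiplierHopf K B}
variable (P : MHAPairing K A B hA hB)

section Expansion

variable {ι : Type*} {s : Finset ι}

theorem pair_mul_eq_sum {c1 c2 : ι → B} {c : B}
    (hc : hB.comul c = ∑ i ∈ s, c1 i ⊗ₜ[K] c2 i) (a a' : A) :
    P.pair (a * a') c = ∑ i ∈ s, P.pair a (c1 i) * P.pair a' (c2 i) := by
  obtain ⟨t, d1, d2, hd⟩ := TensorProduct.exists_nat_sum_tmul_eq (hB.comul c)
  have key := congrArg (dualDistrib K B B (P.pair a ⊗ₜ P.pair a')) (hd.symm.trans hc)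
  simp only [map_sum, dualDistrib_apply] at key
  rw [P.pair_mul_comul a a' c t d1 d2 hd, key]

theorem pair_apply_mul_eq_sum {c1 c2 : ι → A} {c : A}
    (hc : hA.comul c = ∑ i ∈ s, c1 i ⊗ₜ[K] c2 i) (b b' : B) :
    P.pair c (b * b') = ∑ i ∈ s, P.pair (c1 i) b * P.pair (c2 i) b' := by
  obtain ⟨t, d1, d2, hd⟩ := TensorProduct.exists_nat_sum_tmul_eq (hA.comul c)
  have key := congrArg (dualDistrib K A A (P.pair.flip b ⊗ₜ P.pair.flip b')) (hd.symm.trans hc)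
  simp only [map_sum, dualDistrib_apply, LinearMap.flip_apply] at key
  rw [P.pair_comul_mul c b b' t d1 d2 hd, key]

theorem lact_eq_sum {c1 c2 : ι → A} {c : A} (hc : hA.comul c = ∑ i ∈ s, c1 i ⊗ₜ[K] c2 i)
    (b : B) : P.lact b c = ∑ i ∈ s, P.pair (c2 i) b • c1 i := by
  simp [lact, hc]

theorem ract_eq_sum {c1 c2 : ι → A} {c : A} (hc : hA.comul c = ∑ i ∈ s, c1 i ⊗ₜ[K] c2 i)
    (b : B) : P.ract c b = ∑ i ∈ s, P.pair (c1 i) b • c2 i := by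
  simp [ract, hc]

theorem lactB_eq_sum {c1 c2 : ι → B} {c : B} (hc : hB.comul c = ∑ i ∈ s, c1 i ⊗ₜ[K] c2 i)
    (a : A) : P.lactB a c = ∑ i ∈ s, P.pair a (c2 i) • c1 i := by
  simp [lactB, hc]

theorem ractB_eq_sum {c1 c2 : ι → B} {c : B} (hc : hB.comul c = ∑ i ∈ s, c1 i ⊗ₜ[K] c2 i)
    (a : A) : P.ractB c a = ∑ i ∈ s, P.pair a (c1 i) • c2 i := by
  simp [ractB, hc]

end Expansion

theorem pair_lact (b : B) (a : A) (c : B) : P.pair (P.lact b a) c = P.pair a (c * b) := by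
  rw [P.lact_eq_sum (hA.comul_eq_sum_sweedler a), P.pair_apply_mul_eq_sum
    (hA.comul_eq_sum_sweedler a)]
  simp [mul_comm]

theorem pair_ract (a : A) (b c : B) : P.pair (P.ract a b) c = P.pair a (b * c) := by
  rw [P.ract_eq_sum (hA.comul_eq_sum_sweedler a), P.pair_apply_mul_eq_sum
    (hA.comul_eq_sum_sweedler a)]
  simp

theorem pair_lactB (a' a : A) (b : B) : P.pair a' (P.lactB a b) = P.pair (a' * a) b := by
  rw [P.lactB_eq_sum (hB.comul_eq_sum_sweedler b), P.pair_mul_eq_sum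
    (hB.comul_eq_sum_sweedler b)]
  simp [mul_comm]

theorem pair_ractB (a' : A) (b : B) (a : A) : P.pair a' (P.ractB b a) = P.pair (a * a') b := by
  rw [P.ractB_eq_sum (hB.comul_eq_sum_sweedler b), P.pair_mul_eq_sum
    (hB.comul_eq_sum_sweedler b)]
  simp

theorem eq_of_forall_pair_eq {a a' : A} (h : ∀ b, P.pair a b = P.pair a' b) : a = a' :=
  sub_eq_zero.mp <| P.nondeg_left _ fun b => by rw [map_sub, LinearMap.sub_apply, h, sub_self]

theorem eq_zero_of_forall_lact_eq_zero {b : B} (hb : ∀ a, P.lact b a = 0) : b = 0 :=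
  hB.mul_nondeg_right b fun c => P.nondeg_right _ fun a => by
    rw [← pair_lact, hb, map_zero, LinearMap.zero_apply]

theorem eq_zero_of_forall_ract_eq_zero {b : B} (hb : ∀ a, P.ract a b = 0) : b = 0 :=
  hB.mul_nondeg_left b fun c => P.nondeg_right _ fun a => by
    rw [← pair_ract, hb, map_zero, LinearMap.zero_apply]

theorem eq_zero_of_forall_lactB_eq_zero {a : A} (ha : ∀ b, P.lactB a b = 0) : a = 0 :=
  hA.mul_nondeg_right a fun a' => P.nondeg_left _ fun b => by rw [← pair_lactB, ha, map_zero]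

theorem eq_zero_of_forall_ractB_eq_zero {a : A} (ha : ∀ b, P.ractB b a = 0) : a = 0 :=
  hA.mul_nondeg_left a fun a' => P.nondeg_left _ fun b => by rw [← pair_ractB, ha, map_zero]

theorem lact_lact (x y : B) (a : A) : P.lact x (P.lact y a) = P.lact (x * y) a :=
  P.eq_of_forall_pair_eq fun c => by rw [pair_lact, pair_lact, pair_lact, mul_assoc]

theorem lact_mul {ι : Type*} {s : Finset ι} {b1 b2 : ι → B} {b : B}
    (hb : hB.comul b = ∑ i ∈ s, b1 i ⊗ₜ[K] b2 i) (w w' : A) :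
    P.lact b (w * w') = ∑ i ∈ s, P.lact (b1 i) w * P.lact (b2 i) w' := by
  refine P.eq_of_forall_pair_eq fun c => ?_
  rw [pair_lact, P.pair_mul_eq_sum (comul_mul_eq_sum (hB.comul_eq_sum_sweedler c) hb),
    map_sum, LinearMap.sum_apply, Finset.sum_product, Finset.sum_comm]
  simp only [P.pair_mul_eq_sum (hB.comul_eq_sum_sweedler c), pair_lact]

theorem sum_lact_antipode_symm_mul {ι : Type*} {s : Finset ι} {c1 c2 : ι → B} {c : B}
    (hc : hB.comul c = ∑ i ∈ s, c1 i ⊗ₜ[K] c2 i) (a : A) :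
    ∑ i ∈ s, P.lact (hB.antipode.symm (c2 i) * c1 i) a = hB.counit c • a :=
  P.eq_of_forall_pair_eq fun d => by
    rw [map_sum, LinearMap.sum_apply]
    simp only [pair_lact]
    rw [← map_sum, ← Finset.mul_sum, mul_sum_antipode_symm_mul hc, map_smul, map_smul,
      LinearMap.smul_apply]

theorem sum_lact_mul_antipode_symm {ι : Type*} {s : Finset ι} {c1 c2 : ι → B} {c : B}
    (hc : hB.comul c = ∑ i ∈ s, c1 i ⊗ₜ[K] c2 i) (a : A) :
    ∑ i ∈ s, P.lact (c2 i * hB.antipode.symm (c1 i)) a = hB.counit c • a :=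
  P.eq_of_forall_pair_eq fun d => by
    rw [map_sum, LinearMap.sum_apply]
    simp only [pair_lact]
    rw [← map_sum, ← Finset.mul_sum, mul_sum_mul_antipode_symm hc, map_smul, map_smul,
      LinearMap.smul_apply]

noncomputable def lactₗ : B →ₗ[K] A →ₗ[K] A :=
  LinearMap.mk₂ K P.lact (by simp [lact]) (by simp [lact]) (by simp [lact]) (by simp [lact])

noncomputable def ractₗ : A →ₗ[K] B →ₗ[K] A :=
  LinearMap.mk₂ K P.ract (by simp [ract]) (by simp [ract]) (by simp [ract]) (by simp [ract])

noncomputable def lactBₗ : A →ₗ[K] B →ₗ[K] B :=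
  LinearMap.mk₂ K P.lactB (by simp [lactB]) (by simp [lactB]) (by simp [lactB])
    (by simp [lactB])

noncomputable def ractBₗ : B →ₗ[K] A →ₗ[K] B :=
  LinearMap.mk₂ K P.ractB (by simp [ractB]) (by simp [ractB]) (by simp [ractB])
    (by simp [ractB])

@[simp] theorem lactₗ_apply (b : B) (a : A) : P.lactₗ b a = P.lact b a := rfl

@[simp] theorem ractₗ_apply (a : A) (b : B) : P.ractₗ a b = P.ract a b := rfl

@[simp] theorem lactBₗ_apply (a : A) (b : B) : P.lactBₗ a b = P.lactB a b := rfl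

@[simp] theorem ractBₗ_apply (b : B) (a : A) : P.ractBₗ b a = P.ractB b a := rfl

noncomputable def twist : B ⊗[K] A →ₗ[K] A ⊗[K] B :=
  LinearMap.rTensor B (TensorProduct.lift P.lactₗ) ∘ₗ
    (TensorProduct.rightComm K B B A).toLinearMap ∘ₗ LinearMap.rTensor A hB.comul

noncomputable def twistInv : A ⊗[K] B →ₗ[K] B ⊗[K] A :=
  LinearMap.lTensor B (TensorProduct.lift (P.lactₗ ∘ₗ hB.antipode.symm.toLinearMap).flip) ∘ₗ
    (TensorProduct.leftComm K A B B).toLinearMap ∘ₗ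
      LinearMap.lTensor A ((TensorProduct.comm K B B).toLinearMap ∘ₗ hB.comul)

theorem twist_tmul {ι : Type*} {s : Finset ι} {b1 b2 : ι → B} {b : B}
    (hb : hB.comul b = ∑ i ∈ s, b1 i ⊗ₜ[K] b2 i) (a : A) :
    P.twist (b ⊗ₜ[K] a) = ∑ i ∈ s, P.lact (b1 i) a ⊗ₜ[K] b2 i := by
  simp [twist, hb, TensorProduct.sum_tmul]

theorem twistInv_tmul {ι : Type*} {s : Finset ι} {b1 b2 : ι → B} {b : B}
    (hb : hB.comul b = ∑ i ∈ s, b1 i ⊗ₜ[K] b2 i) (a : A) :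
    P.twistInv (a ⊗ₜ[K] b) = ∑ i ∈ s, b2 i ⊗ₜ[K] P.lact (hB.antipode.symm (b1 i)) a := by
  simp [twistInv, hb, TensorProduct.tmul_sum]

theorem twistInv_twist (x : B ⊗[K] A) : P.twistInv (P.twist x) = x := by
  induction x with
  | zero => simp
  | add x y hx hy => rw [map_add, map_add, hx, hy]
  | tmul b a =>
    -- `Φ (x ⊗ (y ⊗ z)) = z ⊗ (S⁻¹(y) x ▶ a)`
    let Φ : B ⊗[K] (B ⊗[K] B) →ₗ[K] B ⊗[K] A :=
      (TensorProduct.comm K A B).toLinearMap ∘ₗ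
        LinearMap.rTensor B (P.lactₗ.flip a ∘ₗ LinearMap.mul' K B ∘ₗ
          (TensorProduct.comm K B B).toLinearMap ∘ₗ
            LinearMap.lTensor B hB.antipode.symm.toLinearMap) ∘ₗ
        (TensorProduct.assoc K B B B).symm.toLinearMap
    have hcoassoc := hB.coassoc_sum Φ b
    simp only [Φ, LinearMap.comp_apply, LinearEquiv.coe_coe, TensorProduct.assoc_symm_tmul,
      LinearMap.rTensor_tmul, LinearMap.lTensor_tmul, TensorProduct.comm_tmul,
      LinearMap.mul'_apply, LinearMap.flip_apply, lactₗ_apply] at hcoassoc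
    rw [P.twist_tmul (hB.comul_eq_sum_sweedler b), map_sum]
    simp only [P.twistInv_tmul (hB.comul_eq_sum_sweedler _), lact_lact]
    rw [← hcoassoc]
    simp only [← TensorProduct.tmul_sum, P.sum_lact_antipode_symm_mul
      (hB.comul_eq_sum_sweedler _), ← TensorProduct.smul_tmul, ← TensorProduct.sum_tmul,
      sum_counit_smul_left (hB.comul_eq_sum_sweedler b)]

theorem twist_twistInv (y : A ⊗[K] B) : P.twist (P.twistInv y) = y := by
  induction y with
  | zero => simp
  | add x y hx hy => rw [map_add, map_add, hx, hy]
  | tmul a b =>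
    -- `Φ (x ⊗ (y ⊗ z)) = (y S⁻¹(x) ▶ a) ⊗ z`
    let Φ : B ⊗[K] (B ⊗[K] B) →ₗ[K] A ⊗[K] B :=
      LinearMap.rTensor B (P.lactₗ.flip a ∘ₗ LinearMap.mul' K B ∘ₗ
          (TensorProduct.comm K B B).toLinearMap ∘ₗ
            LinearMap.rTensor B hB.antipode.symm.toLinearMap) ∘ₗ
        (TensorProduct.assoc K B B B).symm.toLinearMap
    have hcoassoc := hB.coassoc_sum Φ b
    simp only [Φ, LinearMap.comp_apply, LinearEquiv.coe_coe, TensorProduct.assoc_symm_tmul,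
      LinearMap.rTensor_tmul, TensorProduct.comm_tmul, LinearMap.mul'_apply,
      LinearMap.flip_apply, lactₗ_apply] at hcoassoc
    rw [P.twistInv_tmul (hB.comul_eq_sum_sweedler b), map_sum]
    simp only [P.twist_tmul (hB.comul_eq_sum_sweedler _), lact_lact]
    rw [← hcoassoc]
    simp only [← TensorProduct.sum_tmul, P.sum_lact_mul_antipode_symm
      (hB.comul_eq_sum_sweedler _), TensorProduct.smul_tmul, ← TensorProduct.tmul_sum,
      sum_counit_smul_left (hB.comul_eq_sum_sweedler b)]

theorem twist_bijective : Function.Bijective P.twist :=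
  Function.bijective_iff_has_inverse.mpr ⟨P.twistInv, P.twistInv_twist, P.twist_twistInv⟩

noncomputable def heisenbergMul : A ⊗[K] B →ₗ[K] A ⊗[K] B →ₗ[K] A ⊗[K] B :=
  TensorProduct.curry <|
    TensorProduct.map (LinearMap.mul' K A) (LinearMap.mul' K B) ∘ₗ
      (TensorProduct.tensorTensorTensorAssoc K A A B B).symm.toLinearMap ∘ₗ
        LinearMap.rTensor B (LinearMap.lTensor A P.twist) ∘ₗ
          (TensorProduct.tensorTensorTensorAssoc K A B A B).toLinearMap

theorem heisenbergMul_tmul {ι : Type*} {s : Finset ι} {b1 b2 : ι → B} {b : B}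
    (hb : hB.comul b = ∑ i ∈ s, b1 i ⊗ₜ[K] b2 i) (a a' : A) (b' : B) :
    P.heisenbergMul (a ⊗ₜ[K] b) (a' ⊗ₜ[K] b')
      = ∑ i ∈ s, (a * P.lact (b1 i) a') ⊗ₜ[K] (b2 i * b') := by
  simp [heisenbergMul, P.twist_tmul hb, TensorProduct.tmul_sum, TensorProduct.sum_tmul]

theorem heisenbergMul_heisenbergMul_tmul (a a' a'' : A) (b b' b'' : B) :
    P.heisenbergMul (P.heisenbergMul (a ⊗ₜ[K] b) (a' ⊗ₜ[K] b')) (a'' ⊗ₜ[K] b'')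
      = ∑ m ∈ hB.sweedler b', ∑ p ∈ hB.sweedler b, ∑ q ∈ hB.sweedler p.2,
          (a * (P.lact p.1 a' * P.lact (q.1 * m.1) a'')) ⊗ₜ[K] (q.2 * (m.2 * b'')) := by
  rw [P.heisenbergMul_tmul (hB.comul_eq_sum_sweedler b), map_sum, LinearMap.sum_apply,
    Finset.sum_comm]
  refine Finset.sum_congr rfl fun p _ => ?_
  rw [P.heisenbergMul_tmul (comul_mul_eq_sum (hB.comul_eq_sum_sweedler p.2)
    (hB.comul_eq_sum_sweedler b')), Finset.sum_product, Finset.sum_comm]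
  simp only [mul_assoc]

theorem heisenbergMul_tmul_heisenbergMul (a a' a'' : A) (b b' b'' : B) :
    P.heisenbergMul (a ⊗ₜ[K] b) (P.heisenbergMul (a' ⊗ₜ[K] b') (a'' ⊗ₜ[K] b''))
      = ∑ m ∈ hB.sweedler b', ∑ p ∈ hB.sweedler b, ∑ q ∈ hB.sweedler p.1,
          (a * (P.lact q.1 a' * P.lact (q.2 * m.1) a'')) ⊗ₜ[K] (p.2 * (m.2 * b'')) := by
  rw [P.heisenbergMul_tmul (hB.comul_eq_sum_sweedler b'), map_sum]
  simp only [P.heisenbergMul_tmul (hB.comul_eq_sum_sweedler b),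
    P.lact_mul (hB.comul_eq_sum_sweedler _), lact_lact, Finset.mul_sum,
    TensorProduct.sum_tmul]

theorem heisenbergMul_assoc_tmul (a a' a'' : A) (b b' b'' : B) :
    P.heisenbergMul (P.heisenbergMul (a ⊗ₜ[K] b) (a' ⊗ₜ[K] b')) (a'' ⊗ₜ[K] b'')
      = P.heisenbergMul (a ⊗ₜ[K] b) (P.heisenbergMul (a' ⊗ₜ[K] b') (a'' ⊗ₜ[K] b'')) := by
  rw [heisenbergMul_heisenbergMul_tmul, heisenbergMul_tmul_heisenbergMul]
  refine Finset.sum_congr rfl fun m _ => ?_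
  -- `Φ (x ⊗ (y ⊗ z)) = a (x ▶ a') (y m₍₁₎ ▶ a'') ⊗ z m₍₂₎ b''`
  let Φ : B ⊗[K] (B ⊗[K] B) →ₗ[K] A ⊗[K] B :=
    TensorProduct.map (LinearMap.mulLeft K a ∘ₗ LinearMap.mul' K A ∘ₗ
        TensorProduct.map (P.lactₗ.flip a') (P.lactₗ.flip a'' ∘ₗ LinearMap.mulRight K m.1))
      (LinearMap.mulRight K (m.2 * b'')) ∘ₗ (TensorProduct.assoc K B B B).symm.toLinearMap
  have hcoassoc := hB.coassoc_sum Φ b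
  simp only [Φ, LinearMap.comp_apply, LinearEquiv.coe_coe, TensorProduct.assoc_symm_tmul,
    TensorProduct.map_tmul, LinearMap.mul'_apply, LinearMap.mulLeft_apply,
    LinearMap.mulRight_apply, LinearMap.flip_apply, lactₗ_apply] at hcoassoc
  exact hcoassoc.symm

theorem heisenbergMul_assoc (x y z : A ⊗[K] B) :
    P.heisenbergMul (P.heisenbergMul x y) z = P.heisenbergMul x (P.heisenbergMul y z) := by
  induction x with
  | zero => simp
  | add x x' hx hx' => simp only [map_add, LinearMap.add_apply, hx, hx']
  | tmul a b =>
    induction y with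
    | zero => simp
    | add y y' hy hy' => simp only [map_add, LinearMap.add_apply, hy, hy']
    | tmul a' b' =>
      induction z with
      | zero => simp
      | add z z' hz hz' => simp only [map_add, hz, hz']
      | tmul a'' b'' => exact P.heisenbergMul_assoc_tmul a a' a'' b b' b''

theorem dualDistrib_heisenbergMul_tmul_right (x : A ⊗[K] B) (a' : A) (b' : B) (p : A) (q : B) :
    dualDistrib K A B (P.pair.flip q ⊗ₜ P.pair p) (P.heisenbergMul x (a' ⊗ₜ[K] b'))
      = dualDistrib K B A (P.pair a' ⊗ₜ P.pair.flip b')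
          ((P.ractₗ p).lTensor B (hB.T₂ ((P.ractBₗ q).rTensor B x))) := by
  induction x with
  | zero => simp
  | add x y hx hy => simp only [map_add, LinearMap.add_apply, hx, hy]
  | tmul a b =>
    simp only [P.heisenbergMul_tmul (hB.comul_eq_sum_sweedler b), LinearMap.rTensor_tmul,
      hB.T₂_tmul (hB.comul_eq_sum_sweedler b), map_sum, LinearMap.lTensor_tmul,
      dualDistrib_apply, LinearMap.flip_apply, ractBₗ_apply, ractₗ_apply, pair_ract,
      ← pair_ractB, pair_lact]

theorem dualDistrib_heisenbergMul_tmul_left (x : A ⊗[K] B) (a' : A) (b' : B) (p : A) (q : B) :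
    dualDistrib K A B (P.pair.flip q ⊗ₜ P.pair p) (P.heisenbergMul (a' ⊗ₜ[K] b') x)
      = dualDistrib K B A (P.pair a' ⊗ₜ P.pair.flip b')
          ((P.lactBₗ.flip q).rTensor A (hA.T₁ ((P.lactₗ.flip p).lTensor A x))) := by
  induction x with
  | zero => simp
  | add x y hx hy => simp only [map_add, hx, hy]
  | tmul a b =>
    simp only [P.heisenbergMul_tmul (hB.comul_eq_sum_sweedler b'), LinearMap.lTensor_tmul,
      hA.T₁_tmul (hA.comul_eq_sum_sweedler a), map_sum, LinearMap.rTensor_tmul,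
      dualDistrib_apply, LinearMap.flip_apply, lactBₗ_apply, lactₗ_apply, pair_lactB,
      P.pair_mul_eq_sum (hB.comul_eq_sum_sweedler b'), pair_lact,
      P.lact_eq_sum (hA.comul_eq_sum_sweedler a), Finset.mul_sum, mul_smul_comm, map_smul,
      smul_eq_mul, Finset.sum_mul]
    rw [Finset.sum_comm]
    refine Finset.sum_congr rfl fun j _ => Finset.sum_congr rfl fun m _ => ?_
    ring

theorem heisenbergMul_separatingLeft : P.heisenbergMul.SeparatingLeft := by
  intro x hx
  refine eq_zero_of_forall_rTensor_eq_zero P.ractBₗ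
    (fun a ha => P.eq_zero_of_forall_ractB_eq_zero ha) x fun q => ?_
  refine (injective_iff_map_eq_zero hB.T₂).mp hB.T₂_injective _ ?_
  refine eq_zero_of_forall_lTensor_eq_zero P.ractₗ
    (fun b hb => P.eq_zero_of_forall_ract_eq_zero hb) _ fun p => ?_
  refine eq_zero_of_forall_dualDistrib_eq_zero P.pair P.pair.flip P.nondeg_right
    P.nondeg_left _ fun a' b' => ?_
  rw [← dualDistrib_heisenbergMul_tmul_right, hx, map_zero]

theorem heisenbergMul_separatingRight : P.heisenbergMul.SeparatingRight := by
  intro x hx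
  refine eq_zero_of_forall_lTensor_eq_zero P.lactₗ.flip
    (fun b hb => P.eq_zero_of_forall_lact_eq_zero hb) x fun p => ?_
  refine (injective_iff_map_eq_zero hA.T₁).mp hA.T₁_injective _ ?_
  refine eq_zero_of_forall_rTensor_eq_zero P.lactBₗ.flip
    (fun a ha => P.eq_zero_of_forall_lactB_eq_zero ha) _ fun q => ?_
  refine eq_zero_of_forall_dualDistrib_eq_zero P.pair P.pair.flip P.nondeg_right
    P.nondeg_left _ fun a' b' => ?_
  rw [← dualDistrib_heisenbergMul_tmul_left, hx, map_zero]

end MHAPairing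

/-- Let `⟨A, B⟩` be a pairing of regular multiplier Hopf algebras over a
field `K`.  The map `R : B ⊗ A → A ⊗ B` defined by `R(b ⊗ a) = b₍₁₎ ▶ a ⊗ b₍₂₎` is
bijective with inverse `R⁻¹(a ⊗ b) = b₍₂₎ ⊗ S⁻¹(b₍₁₎) ▶ a`; consequently the Heisenberg
double product `(a # b)(a' # b') = a(b₍₁₎ ▶ a') # b₍₂₎ b'` on `A ⊗ B` is a non-degenerate
associative product. -/
theorem heisenberg_double_product_nondegenerate_associative
    {K : Type} [Field K]
    {A : Type} [NonUnitalRing A] [Module K A] [SMulCommClass K A A] [IsScalarTower K A A]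
    {B : Type} [NonUnitalRing B] [Module K B] [SMulCommClass K B B] [IsScalarTower K B B]
    {hA : RegularMultiplierHopf K A} {hB : RegularMultiplierHopf K B}
    (P : MHAPairing K A B hA hB) :
    ∃ (R : B ⊗[K] A →ₗ[K] A ⊗[K] B) (R' : A ⊗[K] B →ₗ[K] B ⊗[K] A),
      -- `R(b ⊗ a) = b₍₁₎ ▶ a ⊗ b₍₂₎`
      (∀ (b : B) (a : A) (s : Finset ℕ) (b1 b2 : ℕ → B),
        hB.comul b = ∑ i ∈ s, b1 i ⊗ₜ[K] b2 i →
        R (b ⊗ₜ[K] a) = ∑ i ∈ s, (P.lact (b1 i) a) ⊗ₜ[K] b2 i) ∧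
      -- `R⁻¹(a ⊗ b) = b₍₂₎ ⊗ S⁻¹(b₍₁₎) ▶ a`
      (∀ (a : A) (b : B) (s : Finset ℕ) (b1 b2 : ℕ → B),
        hB.comul b = ∑ i ∈ s, b1 i ⊗ₜ[K] b2 i →
        R' (a ⊗ₜ[K] b) = ∑ i ∈ s, (b2 i) ⊗ₜ[K] (P.lact (hB.antipode.symm (b1 i)) a)) ∧
      Function.Bijective R ∧
      (∀ x : B ⊗[K] A, R' (R x) = x) ∧ (∀ y : A ⊗[K] B, R (R' y) = y) ∧
      -- the Heisenberg double product
      ∃ hmul : (A ⊗[K] B) →ₗ[K] (A ⊗[K] B) →ₗ[K] (A ⊗[K] B),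
        -- `(a # b)(a' # b') = a(b₍₁₎ ▶ a') # b₍₂₎ b'`
        (∀ (a a' : A) (b b' : B) (s : Finset ℕ) (b1 b2 : ℕ → B),
          hB.comul b = ∑ i ∈ s, b1 i ⊗ₜ[K] b2 i →
          hmul (a ⊗ₜ[K] b) (a' ⊗ₜ[K] b')
            = ∑ i ∈ s, (a * P.lact (b1 i) a') ⊗ₜ[K] ((b2 i) * b')) ∧
        -- associativity
        (∀ x y z : A ⊗[K] B, hmul (hmul x y) z = hmul x (hmul y z)) ∧
        -- non-degeneracy of the product
        (∀ x : A ⊗[K] B, (∀ y : A ⊗[K] B, hmul x y = 0) → x = 0) ∧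
        (∀ x : A ⊗[K] B, (∀ y : A ⊗[K] B, hmul y x = 0) → x = 0) :=
  ⟨P.twist, P.twistInv, fun _ a _ _ _ hb => P.twist_tmul hb a,
    fun a _ _ _ _ hb => P.twistInv_tmul hb a, P.twist_bijective, P.twistInv_twist,
    P.twist_twistInv, P.heisenbergMul, fun a a' _ b' _ _ _ hb => P.heisenbergMul_tmul hb a a' b',
    P.heisenbergMul_assoc, P.heisenbergMul_separatingLeft, P.heisenbergMul_separatingRight⟩
end

section
/- Let D be a regular multiplier Hopf algebra and let X and Y be two (left-left) Yetter-Drinfel'd D-module algebras. Then their braided product X∝Y, namely the vector space X⊗Y with product (x∝y)(x'∝y') = x(y_(-1)·x') ∝ y_(0)y', is again a (left-left) Yetter-Drinfel'd D-module algebra with the tensor product action and coaction. -/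
open TensorProduct LinearMap
open scoped TensorProduct

/-- A (left-left) Yetter-Drinfel'd module algebra over a regular multiplier Hopf algebra
`D`: a non-degenerate algebra `X` which is a unital left `D`-module algebra and a left
`D`-comodule algebra, such that the Yetter-Drinfel'd compatibility condition
`(d₍₁₎ · x)₍₋₁₎ d₍₂₎ d' ⊗ (d₍₁₎ · x)₍₀₎ = d₍₁₎ x₍₋₁₎ d' ⊗ d₍₂₎ · x₍₀₎` holds. -/
structure YetterDrinfeldModuleAlgebra (K : Type) [Field K]
    (D : Type) [NonUnitalRing D] [Module K D] [SMulCommClass K D D] [IsScalarTower K D D]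
    (X : Type) [NonUnitalRing X] [Module K X] [SMulCommClass K X X] [IsScalarTower K X X]
    (hD : RegularMultiplierHopf K D) : Type where
  act : D →ₗ[K] X →ₗ[K] X
  coact : X →ₗ[K] D ⊗[K] X
  act_act : ∀ (d d' : D) (x : X), act (d * d') x = act d (act d' x)
  act_unital : Submodule.span K {y : X | ∃ (d : D) (x : X), act d x = y} = ⊤
  act_mul : ∀ (d : D) (s : Finset ℕ) (d1 d2 : ℕ → D),
    hD.comul d = ∑ i ∈ s, d1 i ⊗ₜ[K] d2 i →
    ∀ x y : X, act d (x * y) = ∑ i ∈ s, act (d1 i) x * act (d2 i) y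
  coact_coassoc : ∀ x : X,
    (TensorProduct.assoc K D D X) ((LinearMap.rTensor X hD.comul) (coact x))
      = (LinearMap.lTensor D coact) (coact x)
  coact_counit : ∀ x : X,
    (TensorProduct.lid K X) ((LinearMap.rTensor X hD.counit) (coact x)) = x
  coact_mul : ∀ x y : X, coact (x * y) = coact x * coact y
  yd : ∀ (d : D) (s : Finset ℕ) (d1 d2 : ℕ → D),
    hD.comul d = ∑ i ∈ s, d1 i ⊗ₜ[K] d2 i →
    ∀ (d' : D) (x : X),
      ∑ i ∈ s, (LinearMap.rTensor X (LinearMap.mulRight K (d2 i * d')))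
          (coact (act (d1 i) x))
        = ∑ i ∈ s, (TensorProduct.map
            ((LinearMap.mulLeft K (d1 i)) ∘ₗ (LinearMap.mulRight K d'))
            (act (d2 i))) (coact x)


/-!
The braided product is the composite `(m_X ⊗ m_Y) ∘ (1 ⊗ c ⊗ 1)` (up to reassociation) of the
multiplications of `X` and `Y` with the braiding `c (y ⊗ x) = y₍₋₁₎ · x ⊗ y₍₀₎`. Each factor is
`D`-linear and `D`-colinear for the tensor product action and coaction: the multiplications
because `X` and `Y` are module and comodule algebras, the braiding because of the
Yetter-Drinfel'd condition. Hence so is the braided product, which is exactly the statement that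
`X ∝ Y` is a `D`-module algebra and a `D`-comodule algebra. Associativity comes from the
hexagon identities `c ∘ (m_Y ⊗ 1) = (1 ⊗ m_Y) ∘ (c ⊗ 1) ∘ (1 ⊗ c)` and
`c ∘ (1 ⊗ m_X) = (m_X ⊗ 1) ∘ (1 ⊗ c) ∘ (c ⊗ 1)`, and the Yetter-Drinfel'd condition for `X ⊗ Y`
from those for `X` and `Y` by coassociativity.
-/

theorem TensorProduct.exists_sum_range_tmul {R V W : Type} [CommSemiring R] [AddCommMonoid V]
    [Module R V] [AddCommMonoid W] [Module R W] (t : V ⊗[R] W) :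
    ∃ (n : ℕ) (f : ℕ → V) (g : ℕ → W), t = ∑ i ∈ Finset.range n, f i ⊗ₜ[R] g i := by
  classical
  obtain ⟨n, f, g, rfl⟩ := exists_sum_tmul_eq t
  refine ⟨n, fun i => if h : i < n then f ⟨i, h⟩ else 0,
    fun i => if h : i < n then g ⟨i, h⟩ else 0, ?_⟩
  rw [Finset.sum_range]
  simp

namespace RegularMultiplierHopf

section Hom

variable {K : Type} [CommSemiring K]
variable {D U V W : Type} [AddCommMonoid D] [Module K D] [AddCommMonoid U] [Module K U]
  [AddCommMonoid V] [Module K V] [AddCommMonoid W] [Module K W]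

def IsActionHom (a : D →ₗ[K] V →ₗ[K] V) (b : D →ₗ[K] W →ₗ[K] W) (f : V →ₗ[K] W) : Prop :=
  ∀ d v, f (a d v) = b d (f v)

def IsCoactionHom (ρ : V →ₗ[K] D ⊗[K] V) (σ : W →ₗ[K] D ⊗[K] W) (f : V →ₗ[K] W) : Prop :=
  ∀ v, σ (f v) = lTensor D f (ρ v)

variable {a : D →ₗ[K] U →ₗ[K] U} {b : D →ₗ[K] V →ₗ[K] V} {c : D →ₗ[K] W →ₗ[K] W}

theorem isActionHom_id : IsActionHom a a LinearMap.id := fun _ _ => rfl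

theorem IsActionHom.comp {f : U →ₗ[K] V} {g : V →ₗ[K] W} (hg : IsActionHom b c g)
    (hf : IsActionHom a b f) : IsActionHom a c (g ∘ₗ f) := fun d u => by
  rw [comp_apply, hf, hg, comp_apply]

theorem IsActionHom.symm {e : U ≃ₗ[K] V} (he : IsActionHom a b e) :
    IsActionHom b a e.symm.toLinearMap := fun d v => e.injective <| by
  simp only [LinearEquiv.coe_coe, LinearEquiv.apply_symm_apply]
  rw [← LinearEquiv.coe_coe, he, LinearEquiv.coe_coe, LinearEquiv.apply_symm_apply]

variable {ρ : U →ₗ[K] D ⊗[K] U} {σ : V →ₗ[K] D ⊗[K] V} {τ : W →ₗ[K] D ⊗[K] W}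

theorem isCoactionHom_id : IsCoactionHom ρ ρ LinearMap.id := fun u => by simp

theorem IsCoactionHom.comp {f : U →ₗ[K] V} {g : V →ₗ[K] W} (hg : IsCoactionHom σ τ g)
    (hf : IsCoactionHom ρ σ f) : IsCoactionHom ρ τ (g ∘ₗ f) := fun u => by
  rw [comp_apply, hg, hf, ← comp_apply, ← lTensor_comp]

theorem IsCoactionHom.symm {e : U ≃ₗ[K] V} (he : IsCoactionHom ρ σ e) :
    IsCoactionHom σ ρ e.symm.toLinearMap := fun v => by
  have h := he (e.symm v)
  rw [LinearEquiv.coe_coe, LinearEquiv.apply_symm_apply] at h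
  rw [h, ← comp_apply (lTensor D e.symm.toLinearMap), ← lTensor_comp]
  simp

def actOn (a : D →ₗ[K] V →ₗ[K] V) : (D ⊗[K] W) ⊗[K] V →ₗ[K] V ⊗[K] W :=
  lift (rTensorHom W ∘ₗ a.flip).flip

@[simp]
theorem actOn_tmul (a : D →ₗ[K] V →ₗ[K] V) (d : D) (w : W) (v : V) :
    actOn a ((d ⊗ₜ w) ⊗ₜ v) = a d v ⊗ₜ w := rfl

def braiding (a : D →ₗ[K] V →ₗ[K] V) (σ : W →ₗ[K] D ⊗[K] W) : W ⊗[K] V →ₗ[K] V ⊗[K] W :=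
  actOn a ∘ₗ rTensor V σ

theorem braiding_tmul (a : D →ₗ[K] V →ₗ[K] V) (σ : W →ₗ[K] D ⊗[K] W) (w : W) (v : V) :
    braiding a σ (w ⊗ₜ v) = actOn a (σ w ⊗ₜ v) := rfl

end Hom

variable {K : Type} [Field K]
variable {U V W U' V' : Type} [AddCommGroup U] [Module K U] [AddCommGroup V] [Module K V]
  [AddCommGroup W] [Module K W] [AddCommGroup U'] [Module K U'] [AddCommGroup V'] [Module K V']
variable {D : Type} [NonUnitalRing D] [Module K D] [SMulCommClass K D D] [IsScalarTower K D D]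

section Action

variable (hD : RegularMultiplierHopf K D)

def tensorAct (a : D →ₗ[K] V →ₗ[K] V) (b : D →ₗ[K] W →ₗ[K] W) :
    D →ₗ[K] V ⊗[K] W →ₗ[K] V ⊗[K] W :=
  homTensorHomMap (RingHom.id K) V W V W ∘ₗ map a b ∘ₗ hD.comul

variable {hD}
variable {a : D →ₗ[K] U →ₗ[K] U} {b : D →ₗ[K] V →ₗ[K] V} {c : D →ₗ[K] W →ₗ[K] W}

theorem tensorAct_tmul (d : D) (v : V) (w : W) :
    hD.tensorAct b c d (v ⊗ₜ w) = map (b.flip v) (c.flip w) (hD.comul d) := by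
  rw [tensorAct, comp_apply, comp_apply]
  induction hD.comul d with
  | zero => simp
  | tmul e f => simp
  | add s t hs ht => simp only [map_add, LinearMap.add_apply, hs, ht]

theorem IsActionHom.map {a' : D →ₗ[K] U' →ₗ[K] U'} {b' : D →ₗ[K] V' →ₗ[K] V'}
    {f : U →ₗ[K] U'} {g : V →ₗ[K] V'} (hf : IsActionHom a a' f) (hg : IsActionHom b b' g) :
    IsActionHom (hD.tensorAct a b) (hD.tensorAct a' b') (TensorProduct.map f g) := by
  intro d t
  induction t with
  | zero => simp
  | add s t hs ht => rw [map_add, map_add, hs, ht, map_add, map_add]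
  | tmul u v =>
    rw [tensorAct_tmul, map_tmul, tensorAct_tmul, ← comp_apply, ← map_comp]
    congr 2 <;> ext d
    · exact hf d u
    · exact hg d v

theorem isActionHom_assoc :
    IsActionHom (hD.tensorAct (hD.tensorAct a b) c) (hD.tensorAct a (hD.tensorAct b c))
      (TensorProduct.assoc K U V W).toLinearMap := by
  intro d t
  induction t with
  | zero => simp
  | add s t hs ht => rw [map_add, map_add, hs, ht, map_add, map_add]
  | tmul uv w =>
    induction uv with
    | zero => simp
    | add s t hs ht => rw [add_tmul, map_add, map_add, hs, ht, map_add, map_add]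
    | tmul u v =>
      have hL : ∀ T : D ⊗[K] D, TensorProduct.assoc K U V W
          (TensorProduct.map ((hD.tensorAct a b).flip (u ⊗ₜ v)) (c.flip w) T)
            = TensorProduct.map (a.flip u) (TensorProduct.map (b.flip v) (c.flip w))
              (TensorProduct.assoc K D D D (rTensor D hD.comul T)) := by
        intro T
        induction T with
        | zero => simp
        | add s t hs ht => simp only [map_add, hs, ht]
        | tmul e f =>
          simp only [map_tmul, rTensor_tmul, flip_apply, tensorAct_tmul]
          induction hD.comul e with
          | zero => simp
          | add s t hs ht => simp only [map_add, add_tmul, hs, ht]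
          | tmul e₁ e₂ => simp
      have hR : ∀ T : D ⊗[K] D,
          TensorProduct.map (a.flip u) ((hD.tensorAct b c).flip (v ⊗ₜ w)) T
            = TensorProduct.map (a.flip u) (TensorProduct.map (b.flip v) (c.flip w))
              (lTensor D hD.comul T) := by
        intro T
        induction T with
        | zero => simp
        | add s t hs ht => simp only [map_add, hs, ht]
        | tmul e f => simp [tensorAct_tmul]
      rw [LinearEquiv.coe_coe, tensorAct_tmul, assoc_tmul, tensorAct_tmul, hL, hR, hD.coassoc]

theorem IsActionHom.apply_tensorAct_tmul {f : U ⊗[K] V →ₗ[K] W}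
    (hf : IsActionHom (hD.tensorAct a b) c f) {d : D} {s : Finset ℕ} {d1 d2 : ℕ → D}
    (hd : hD.comul d = ∑ i ∈ s, d1 i ⊗ₜ[K] d2 i) (u : U) (v : V) :
    c d (f (u ⊗ₜ v)) = ∑ i ∈ s, f (a (d1 i) u ⊗ₜ b (d2 i) v) := by
  rw [← hf, tensorAct_tmul, hd]
  simp

theorem tensorAct_mul (ha : ∀ d d' u, a (d * d') u = a d (a d' u))
    (hb : ∀ d d' v, b (d * d') v = b d (b d' v)) (d d' : D) (t : U ⊗[K] V) :
    hD.tensorAct a b (d * d') t = hD.tensorAct a b d (hD.tensorAct a b d' t) := by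
  have hrep : ∀ S T : D ⊗[K] D, homTensorHomMap (RingHom.id K) U V U V (map a b (S * T))
      = homTensorHomMap (RingHom.id K) U V U V (map a b S)
        ∘ₗ homTensorHomMap (RingHom.id K) U V U V (map a b T) := by
    intro S T
    induction S with
    | zero => simp
    | add S S' hS hS' => simp only [add_mul, map_add, hS, hS', LinearMap.add_comp]
    | tmul e f =>
      induction T with
      | zero => simp
      | add T T' hT hT' => simp only [mul_add, map_add, hT, hT', LinearMap.comp_add]
      | tmul e' f' =>
        refine TensorProduct.ext' fun u v => ?_
        simp [ha, hb]
  rw [tensorAct, comp_apply, comp_apply, hD.comul_mul, hrep]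
  rfl

theorem span_tensorAct_eq_top (hb : ∀ d d' v, b (d * d') v = b d (b d' v))
    (ha_span : Submodule.span K {u | ∃ d u', a d u' = u} = ⊤)
    (hb_span : Submodule.span K {v | ∃ d v', b d v' = v} = ⊤) :
    Submodule.span K {t | ∃ d t', hD.tensorAct a b d t' = t} = ⊤ := by
  set P := Submodule.span K {t | ∃ d t', hD.tensorAct a b d t' = t}
  have hT1 : ∀ (d e : D) (u : U) (v : V), homTensorHomMap (RingHom.id K) U V U V
      (map a b (lTensor D (mul' K D) (TensorProduct.assoc K D D D (rTensor D hD.comul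
        (d ⊗ₜ e))))) (u ⊗ₜ v) = hD.tensorAct a b d (u ⊗ₜ b e v) := by
    intro d e u v
    rw [tensorAct_tmul, rTensor_tmul]
    induction hD.comul d with
    | zero => simp
    | add s t hs ht => simp only [add_tmul, map_add, LinearMap.add_apply, hs, ht]
    | tmul d₁ d₂ => simp [hb]
  -- `d ⊗ e` is in the image of `T₁ : a ⊗ b ↦ Δ(a)(1 ⊗ b)`, and `T₁ (a ⊗ b)` acts on `u ⊗ v`
  -- as `a` acts on `u ⊗ b · v`
  have key : ∀ (d e : D) (u : U) (v : V), a d u ⊗ₜ b e v ∈ P := by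
    intro d e u v
    obtain ⟨w, hw⟩ := hD.T1_bijective.2 (d ⊗ₜ e)
    have hmem : ∀ w : D ⊗[K] D, homTensorHomMap (RingHom.id K) U V U V (map a b
        (lTensor D (mul' K D) (TensorProduct.assoc K D D D (rTensor D hD.comul w))))
          (u ⊗ₜ v) ∈ P := by
      intro w
      induction w with
      | zero => simp
      | add s t hs ht => simpa only [map_add, LinearMap.add_apply] using P.add_mem hs ht
      | tmul d e => exact hT1 d e u v ▸ Submodule.subset_span ⟨_, _, rfl⟩
    simpa [hw] using hmem w
  rw [eq_top_iff, ← map₂_mk_top_top_eq_top, ← ha_span, ← hb_span, Submodule.map₂_span_span,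
    Submodule.span_le]
  rintro _ ⟨_, ⟨d, u, rfl⟩, _, ⟨e, v, rfl⟩, rfl⟩
  exact key d e u v

end Action

section Coaction

def mulLegs : (D ⊗[K] V) ⊗[K] (D ⊗[K] W) →ₗ[K] D ⊗[K] (V ⊗[K] W) :=
  rTensor (V ⊗[K] W) (mul' K D) ∘ₗ (tensorTensorTensorComm K D V D W).toLinearMap

@[simp]
theorem mulLegs_tmul (d e : D) (v : V) (w : W) :
    mulLegs ((d ⊗ₜ[K] v) ⊗ₜ[K] (e ⊗ₜ[K] w)) = (d * e) ⊗ₜ (v ⊗ₜ w) := by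
  simp [mulLegs]

theorem mulLegs_lTensor_tmul_lTensor (f : U →ₗ[K] U') (g : V →ₗ[K] V') (P : D ⊗[K] U)
    (Q : D ⊗[K] V) :
    mulLegs (lTensor D f P ⊗ₜ lTensor D g Q) = lTensor D (map f g) (mulLegs (P ⊗ₜ Q)) := by
  induction P with
  | zero => simp
  | add P P' hP hP' => simp only [map_add, add_tmul, hP, hP']
  | tmul d u =>
    induction Q with
    | zero => simp
    | add Q Q' hQ hQ' => simp only [map_add, tmul_add, hQ, hQ']
    | tmul e v => simp

theorem lTensor_assoc_mulLegs (P : D ⊗[K] U) (Q : D ⊗[K] V) (R : D ⊗[K] W) :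
    lTensor D (TensorProduct.assoc K U V W) (mulLegs (mulLegs (P ⊗ₜ Q) ⊗ₜ R))
      = mulLegs (P ⊗ₜ mulLegs (Q ⊗ₜ R)) := by
  induction P with
  | zero => simp
  | add P P' hP hP' => simp only [map_add, add_tmul, hP, hP']
  | tmul d u =>
    induction Q with
    | zero => simp
    | add Q Q' hQ hQ' => simp only [map_add, tmul_add, add_tmul, hQ, hQ']
    | tmul e v =>
      induction R with
      | zero => simp
      | add R R' hR hR' => simp only [map_add, tmul_add, hR, hR']
      | tmul f w => simp [mul_assoc]

theorem lTensor_mul'_mulLegs {X : Type} [NonUnitalRing X] [Module K X] [SMulCommClass K X X]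
    [IsScalarTower K X X] (P Q : D ⊗[K] X) : lTensor D (mul' K X) (mulLegs (P ⊗ₜ Q)) = P * Q := by
  induction P with
  | zero => simp
  | add P P' hP hP' => simp only [map_add, add_tmul, add_mul, hP, hP']
  | tmul d x =>
    induction Q with
    | zero => simp
    | add Q Q' hQ hQ' => simp only [map_add, tmul_add, mul_add, hQ, hQ']
    | tmul e y => simp

def tensorCoact (ρ : V →ₗ[K] D ⊗[K] V) (σ : W →ₗ[K] D ⊗[K] W) :
    V ⊗[K] W →ₗ[K] D ⊗[K] (V ⊗[K] W) :=
  mulLegs ∘ₗ map ρ σ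

variable {ρ : U →ₗ[K] D ⊗[K] U} {σ : V →ₗ[K] D ⊗[K] V} {τ : W →ₗ[K] D ⊗[K] W}

theorem tensorCoact_tmul (v : V) (w : W) :
    tensorCoact σ τ (v ⊗ₜ w) = mulLegs (σ v ⊗ₜ τ w) := rfl

theorem IsCoactionHom.map {ρ' : U' →ₗ[K] D ⊗[K] U'} {σ' : V' →ₗ[K] D ⊗[K] V'}
    {f : U →ₗ[K] U'} {g : V →ₗ[K] V'} (hf : IsCoactionHom ρ ρ' f) (hg : IsCoactionHom σ σ' g) :
    IsCoactionHom (tensorCoact ρ σ) (tensorCoact ρ' σ') (TensorProduct.map f g) := by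
  intro t
  induction t with
  | zero => simp
  | add s t hs ht => simp only [map_add, hs, ht]
  | tmul u v => rw [map_tmul, tensorCoact_tmul, hf, hg, mulLegs_lTensor_tmul_lTensor]; rfl

theorem isCoactionHom_assoc :
    IsCoactionHom (tensorCoact (tensorCoact ρ σ) τ) (tensorCoact ρ (tensorCoact σ τ))
      (TensorProduct.assoc K U V W).toLinearMap := by
  intro t
  induction t with
  | zero => simp
  | add s t hs ht => simp only [map_add, hs, ht]
  | tmul uv w =>
    induction uv with
    | zero => simp
    | add s t hs ht => simp only [add_tmul, map_add, hs, ht]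
    | tmul u v =>
      simp only [LinearEquiv.coe_coe, assoc_tmul, tensorCoact_tmul, lTensor_assoc_mulLegs]

theorem IsCoactionHom.apply_tmul {f : U ⊗[K] V →ₗ[K] W}
    (hf : IsCoactionHom (tensorCoact ρ σ) τ f) {u : U} {v : V} {s t : Finset ℕ}
    {g g' : ℕ → D} {w : ℕ → U} {w' : ℕ → V}
    (hu : ρ u = ∑ k ∈ s, g k ⊗ₜ[K] w k) (hv : σ v = ∑ l ∈ t, g' l ⊗ₜ[K] w' l) :
    τ (f (u ⊗ₜ v)) = ∑ k ∈ s, ∑ l ∈ t, (g k * g' l) ⊗ₜ[K] f (w k ⊗ₜ w' l) := by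
  rw [hf, tensorCoact_tmul, hu, hv, sum_tmul, map_sum, map_sum]
  simp [tmul_sum]

variable (hD : RegularMultiplierHopf K D)

def IsCoassociative (ρ : V →ₗ[K] D ⊗[K] V) : Prop :=
  ∀ v, TensorProduct.assoc K D D V (rTensor V hD.comul (ρ v)) = lTensor D ρ (ρ v)

def IsCounital (ρ : V →ₗ[K] D ⊗[K] V) : Prop :=
  ∀ v, TensorProduct.lid K V (rTensor V hD.counit (ρ v)) = v

variable {hD}

theorem assoc_rTensor_comul_mulLegs (P : D ⊗[K] V) (Q : D ⊗[K] W) :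
    TensorProduct.assoc K D D (V ⊗[K] W) (rTensor (V ⊗[K] W) hD.comul (mulLegs (P ⊗ₜ Q)))
      = lTensor D mulLegs (mulLegs (TensorProduct.assoc K D D V (rTensor V hD.comul P)
          ⊗ₜ TensorProduct.assoc K D D W (rTensor W hD.comul Q))) := by
  induction P with
  | zero => simp
  | add P P' hP hP' => simp only [map_add, add_tmul, hP, hP']
  | tmul d v =>
    induction Q with
    | zero => simp
    | add Q Q' hQ hQ' => simp only [map_add, tmul_add, hQ, hQ']
    | tmul e w =>
      simp only [mulLegs_tmul, rTensor_tmul, hD.comul_mul]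
      induction hD.comul d with
      | zero => simp
      | add S S' hS hS' => simp only [add_mul, map_add, add_tmul, hS, hS']
      | tmul d₁ d₂ =>
        induction hD.comul e with
        | zero => simp
        | add T T' hT hT' => simp only [mul_add, map_add, add_tmul, tmul_add, hT, hT']
        | tmul e₁ e₂ => simp

theorem IsCoassociative.tensorCoact (hσ : hD.IsCoassociative σ) (hτ : hD.IsCoassociative τ) :
    hD.IsCoassociative (tensorCoact σ τ) := by
  intro t
  induction t with
  | zero => simp
  | add s t hs ht => simp only [map_add, hs, ht]
  | tmul v w =>
    rw [tensorCoact_tmul, assoc_rTensor_comul_mulLegs, hσ, hτ, mulLegs_lTensor_tmul_lTensor,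
      ← comp_apply (lTensor D mulLegs), ← lTensor_comp]
    rfl

theorem lid_rTensor_counit_mulLegs (P : D ⊗[K] V) (Q : D ⊗[K] W) :
    TensorProduct.lid K (V ⊗[K] W) (rTensor (V ⊗[K] W) hD.counit (mulLegs (P ⊗ₜ Q)))
      = TensorProduct.lid K V (rTensor V hD.counit P)
          ⊗ₜ TensorProduct.lid K W (rTensor W hD.counit Q) := by
  induction P with
  | zero => simp
  | add P P' hP hP' => simp only [map_add, add_tmul, hP, hP']
  | tmul d v =>
    induction Q with
    | zero => simp
    | add Q Q' hQ hQ' => simp only [map_add, tmul_add, hQ, hQ']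
    | tmul e w => simp [hD.counit_mul, mul_comm (hD.counit d), mul_smul, smul_tmul']

theorem IsCounital.tensorCoact (hσ : hD.IsCounital σ) (hτ : hD.IsCounital τ) :
    hD.IsCounital (tensorCoact σ τ) := by
  intro t
  induction t with
  | zero => simp
  | add s t hs ht => simp only [map_add, hs, ht]
  | tmul v w => rw [tensorCoact_tmul, lid_rTensor_counit_mulLegs, hσ, hτ]

end Coaction

section YetterDrinfeld

def ydLeft (a : D →ₗ[K] V →ₗ[K] V) (ρ : V →ₗ[K] D ⊗[K] V) : (D ⊗[K] D) ⊗[K] V →ₗ[K] D ⊗[K] V :=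
  lift <| lift <| LinearMap.mk₂ K (fun e f => rTensor V (mulRight K f) ∘ₗ ρ ∘ₗ a e)
    (fun e e' f => by ext; simp) (fun r e f => by ext; simp)
    (fun e f f' => by
      ext v; simp only [comp_apply, LinearMap.add_apply]
      induction ρ (a e v) <;> simp_all [mul_add, add_tmul, add_add_add_comm])
    (fun r e f => by
      ext v; simp only [comp_apply, LinearMap.smul_apply]
      induction ρ (a e v) <;> simp_all [smul_tmul', mul_smul_comm])

def ydRight (a : D →ₗ[K] V →ₗ[K] V) (ρ : V →ₗ[K] D ⊗[K] V) : (D ⊗[K] D) ⊗[K] V →ₗ[K] D ⊗[K] V :=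
  lift <| lift <| LinearMap.mk₂ K (fun e f => TensorProduct.map (mulLeft K e) (a f) ∘ₗ ρ)
    (fun e e' f => by
      ext v; simp only [comp_apply, LinearMap.add_apply]
      induction ρ v <;> simp_all [add_mul, add_tmul, add_add_add_comm])
    (fun r e f => by
      ext v; simp only [comp_apply, LinearMap.smul_apply]
      induction ρ v <;> simp_all [smul_tmul', smul_mul_assoc])
    (fun e f f' => by ext; simp [map_add_right]) (fun r e f => by ext; simp [map_smul_right])

@[simp]
theorem ydLeft_tmul (a : D →ₗ[K] V →ₗ[K] V) (ρ : V →ₗ[K] D ⊗[K] V) (e f : D) (v : V) :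
    ydLeft a ρ ((e ⊗ₜ f) ⊗ₜ v) = rTensor V (mulRight K f) (ρ (a e v)) := rfl

@[simp]
theorem ydRight_tmul (a : D →ₗ[K] V →ₗ[K] V) (ρ : V →ₗ[K] D ⊗[K] V) (e f : D) (v : V) :
    ydRight a ρ ((e ⊗ₜ f) ⊗ₜ v) = TensorProduct.map (mulLeft K e) (a f) (ρ v) := rfl

theorem ext_rTensor_mulRight (hD : RegularMultiplierHopf K D) {t t' : D ⊗[K] V}
    (h : ∀ d : D, rTensor V (mulRight K d) t = rTensor V (mulRight K d) t') : t = t' := by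
  classical
  let b := Module.Basis.ofVectorSpace K V
  let E : D ⊗[K] V ≃ₗ[K] _ →₀ D :=
    (TensorProduct.congr (LinearEquiv.refl K D) b.repr).trans
      (TensorProduct.finsuppScalarRight K K D _)
  have E_rTensor : ∀ (t : D ⊗[K] V) (d : D) (i),
      E (rTensor V (mulRight K d) t) i = E t i * d := by
    intro t d i
    induction t with
    | zero => simp
    | tmul a v => simp [E, finsuppScalarRight_apply_tmul_apply, smul_mul_assoc]
    | add u v hu hv => simp [hu, hv, add_mul]
  refine E.injective (Finsupp.ext fun i => sub_eq_zero.mp (hD.mul_nondeg_left _ fun d => ?_))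
  rw [sub_mul, ← E_rTensor, ← E_rTensor, h]
  exact sub_self _

variable (hD : RegularMultiplierHopf K D)

/-- The Yetter-Drinfel'd condition without the covering factor `d'`: comultiplication and
coaction take values in the algebraic tensor product here, and by non-degeneracy of `D` the two
forms are equivalent (`isYetterDrinfeld_iff`). -/
def IsYetterDrinfeld (a : D →ₗ[K] V →ₗ[K] V) (ρ : V →ₗ[K] D ⊗[K] V) : Prop :=
  ydLeft a ρ ∘ₗ rTensor V hD.comul = ydRight a ρ ∘ₗ rTensor V hD.comul

variable {hD}

theorem isYetterDrinfeld_iff {a : D →ₗ[K] V →ₗ[K] V} {ρ : V →ₗ[K] D ⊗[K] V} :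
    hD.IsYetterDrinfeld a ρ ↔ ∀ (d : D) (s : Finset ℕ) (d1 d2 : ℕ → D),
      hD.comul d = ∑ i ∈ s, d1 i ⊗ₜ[K] d2 i → ∀ (d' : D) (v : V),
        ∑ i ∈ s, rTensor V (mulRight K (d2 i * d')) (ρ (a (d1 i) v))
          = ∑ i ∈ s, map (mulLeft K (d1 i) ∘ₗ mulRight K d') (a (d2 i)) (ρ v) := by
  have hL : ∀ d' e : D, rTensor V (mulRight K d') ∘ₗ rTensor V (mulRight K e)
      = rTensor V (mulRight K (e * d')) := fun d' e => by
    rw [← rTensor_comp]; congr 1; ext; simp [mul_assoc]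
  have hR : ∀ d' e f : D, rTensor V (mulRight K d') ∘ₗ map (mulLeft K e) (a f)
      = map (mulLeft K e ∘ₗ mulRight K d') (a f) := fun d' e f => by
    rw [rTensor_comp_map]; congr 1; ext; simp [mul_assoc]
  have key : ∀ (d : D) (s : Finset ℕ) (d1 d2 : ℕ → D), hD.comul d = ∑ i ∈ s, d1 i ⊗ₜ[K] d2 i →
      ∀ (d' : D) (v : V),
        (rTensor V (mulRight K d') (ydLeft a ρ (hD.comul d ⊗ₜ v))
          = ∑ i ∈ s, rTensor V (mulRight K (d2 i * d')) (ρ (a (d1 i) v))) ∧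
        (rTensor V (mulRight K d') (ydRight a ρ (hD.comul d ⊗ₜ v))
          = ∑ i ∈ s, map (mulLeft K (d1 i) ∘ₗ mulRight K d') (a (d2 i)) (ρ v)) := by
    intro d s d1 d2 hd d' v
    simp only [hd, sum_tmul, map_sum, ydLeft_tmul, ydRight_tmul,
      ← comp_apply (rTensor V (mulRight K d')), hL, hR, and_self]
  constructor
  · intro h d s d1 d2 hd d' v
    rw [← (key d s d1 d2 hd d' v).1, ← (key d s d1 d2 hd d' v).2]
    exact congrArg (fun t => rTensor V (mulRight K d') t) (congrArg (· (d ⊗ₜ v)) h)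
  · intro h
    refine TensorProduct.ext' fun d v => hD.ext_rTensor_mulRight fun d' => ?_
    obtain ⟨n, d1, d2, hd⟩ := exists_sum_range_tmul (hD.comul d)
    simpa only [comp_apply, rTensor_tmul, (key d _ d1 d2 hd d' v).1, (key d _ d1 d2 hd d' v).2]
      using h d _ d1 d2 hd d' v

theorem rTensor_mulRight_mulLegs (f : D) (P : D ⊗[K] V) (Q : D ⊗[K] W) :
    rTensor (V ⊗[K] W) (mulRight K f) (mulLegs (P ⊗ₜ Q))
      = mulLegs (P ⊗ₜ rTensor W (mulRight K f) Q) := by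
  induction P with
  | zero => simp
  | add P P' hP hP' => simp only [map_add, add_tmul, hP, hP']
  | tmul d v =>
    induction Q with
    | zero => simp
    | add Q Q' hQ hQ' => simp only [map_add, tmul_add, hQ, hQ']
    | tmul e w => simp [mul_assoc]

theorem mulLegs_rTensor_mulRight_tmul (e : D) (P : D ⊗[K] V) (Q : D ⊗[K] W) :
    mulLegs (rTensor V (mulRight K e) P ⊗ₜ Q) = mulLegs (P ⊗ₜ rTensor W (mulLeft K e) Q) := by
  induction P with
  | zero => simp
  | add P P' hP hP' => simp only [map_add, add_tmul, hP, hP']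
  | tmul d v =>
    induction Q with
    | zero => simp
    | add Q Q' hQ hQ' => simp only [map_add, tmul_add, hQ, hQ']
    | tmul e w => simp [mul_assoc]

theorem map_mulLeft_map_mulLegs (e : D) (f : U →ₗ[K] U') (g : V →ₗ[K] V') (P : D ⊗[K] U)
    (Q : D ⊗[K] V) :
    map (mulLeft K e) (map f g) (mulLegs (P ⊗ₜ Q))
      = mulLegs (map (mulLeft K e) f P ⊗ₜ lTensor D g Q) := by
  induction P with
  | zero => simp
  | add P P' hP hP' => simp only [map_add, add_tmul, hP, hP']
  | tmul d u =>
    induction Q with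
    | zero => simp
    | add Q Q' hQ hQ' => simp only [map_add, tmul_add, hQ, hQ']
    | tmul e v => simp [mul_assoc]

variable {b : D →ₗ[K] V →ₗ[K] V} {c : D →ₗ[K] W →ₗ[K] W}
variable {σ : V →ₗ[K] D ⊗[K] V} {τ : W →ₗ[K] D ⊗[K] W}

theorem ydLeft_tensor_comul_tmul (d : D) (v : V) (w : W) :
    ydLeft (hD.tensorAct b c) (tensorCoact σ τ) (hD.comul d ⊗ₜ (v ⊗ₜ w))
      = mulLegs (map (σ ∘ₗ b.flip v)
          ((ydLeft c τ ∘ₗ rTensor W hD.comul) ∘ₗ (TensorProduct.mk K D W).flip w)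
          (hD.comul d)) := by
  let Φ := mulLegs ∘ₗ map (σ ∘ₗ b.flip v) (ydLeft c τ ∘ₗ (TensorProduct.mk K (D ⊗[K] D) W).flip w)
  have hL : ∀ T, ydLeft (hD.tensorAct b c) (tensorCoact σ τ) (T ⊗ₜ (v ⊗ₜ w))
      = Φ (TensorProduct.assoc K D D D (rTensor D hD.comul T)) := by
    intro T
    induction T with
    | zero => simp
    | add S T hS hT => simp only [add_tmul, map_add, hS, hT]
    | tmul e f =>
      simp only [ydLeft_tmul, tensorAct_tmul, rTensor_tmul]
      induction hD.comul e with
      | zero => simp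
      | add S T hS hT => simp only [map_add, add_tmul, hS, hT]
      | tmul e₁ e₂ => simp [Φ, tensorCoact_tmul, rTensor_mulRight_mulLegs]
  have hR : ∀ T, mulLegs (map (σ ∘ₗ b.flip v)
      ((ydLeft c τ ∘ₗ rTensor W hD.comul) ∘ₗ (TensorProduct.mk K D W).flip w) T)
        = Φ (lTensor D hD.comul T) := by
    intro T
    induction T with
    | zero => simp
    | add S T hS hT => simp only [map_add, hS, hT]
    | tmul e f => simp [Φ]
  rw [hL, hD.coassoc, hR]

theorem mulLegs_map_ydRight_comul (d : D) (v : V) (w : W) :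
    mulLegs (map (σ ∘ₗ b.flip v)
        ((ydRight c τ ∘ₗ rTensor W hD.comul) ∘ₗ (TensorProduct.mk K D W).flip w) (hD.comul d))
      = mulLegs (map ((ydLeft b σ ∘ₗ rTensor V hD.comul) ∘ₗ (TensorProduct.mk K D V).flip v)
          (applyₗ (τ w) ∘ₗ lTensorHom D ∘ₗ c) (hD.comul d)) := by
  let Φ := mulLegs ∘ₗ map (σ ∘ₗ b.flip v) (ydRight c τ ∘ₗ (TensorProduct.mk K (D ⊗[K] D) W).flip w)
  have hL : ∀ T, mulLegs (map (σ ∘ₗ b.flip v)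
      ((ydRight c τ ∘ₗ rTensor W hD.comul) ∘ₗ (TensorProduct.mk K D W).flip w) T)
        = Φ (lTensor D hD.comul T) := by
    intro T
    induction T with
    | zero => simp
    | add S T hS hT => simp only [map_add, hS, hT]
    | tmul e f => simp [Φ]
  have hR : ∀ T, mulLegs (map ((ydLeft b σ ∘ₗ rTensor V hD.comul) ∘ₗ
      (TensorProduct.mk K D V).flip v) (applyₗ (τ w) ∘ₗ lTensorHom D ∘ₗ c) T)
        = Φ (TensorProduct.assoc K D D D (rTensor D hD.comul T)) := by
    intro T
    induction T with
    | zero => simp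
    | add S T hS hT => simp only [map_add, hS, hT]
    | tmul e f =>
      simp only [comp_apply, map_tmul, flip_apply, TensorProduct.mk_apply, rTensor_tmul]
      induction hD.comul e with
      | zero => simp
      | add S T hS hT => simp only [map_add, add_tmul, hS, hT]
      | tmul e₁ e₂ => simp [Φ, mulLegs_rTensor_mulRight_tmul, ← rTensor_comp_lTensor]
  rw [hL, ← hD.coassoc, hR]

theorem ydRight_tensor_comul_tmul (d : D) (v : V) (w : W) :
    ydRight (hD.tensorAct b c) (tensorCoact σ τ) (hD.comul d ⊗ₜ (v ⊗ₜ w))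
      = mulLegs (map ((ydRight b σ ∘ₗ rTensor V hD.comul) ∘ₗ (TensorProduct.mk K D V).flip v)
          (applyₗ (τ w) ∘ₗ lTensorHom D ∘ₗ c) (hD.comul d)) := by
  let Φ := mulLegs ∘ₗ map (ydRight b σ ∘ₗ (TensorProduct.mk K (D ⊗[K] D) V).flip v)
    (applyₗ (τ w) ∘ₗ lTensorHom D ∘ₗ c) ∘ₗ (TensorProduct.assoc K D D D).symm.toLinearMap
  have hL : ∀ T, ydRight (hD.tensorAct b c) (tensorCoact σ τ) (T ⊗ₜ (v ⊗ₜ w))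
      = Φ (lTensor D hD.comul T) := by
    intro T
    induction T with
    | zero => simp
    | add S T hS hT => simp only [add_tmul, map_add, hS, hT]
    | tmul e f =>
      simp only [ydRight_tmul, lTensor_tmul, tensorCoact_tmul, tensorAct, comp_apply]
      induction hD.comul f with
      | zero => simp
      | add S T hS hT => simp only [map_add, tmul_add, LinearMap.add_apply, map_add_right, hS, hT]
      | tmul f₁ f₂ => simp [Φ, map_mulLeft_map_mulLegs]
  have hR : ∀ T, mulLegs (map ((ydRight b σ ∘ₗ rTensor V hD.comul) ∘ₗ
      (TensorProduct.mk K D V).flip v) (applyₗ (τ w) ∘ₗ lTensorHom D ∘ₗ c) T)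
        = Φ (TensorProduct.assoc K D D D (rTensor D hD.comul T)) := by
    intro T
    induction T with
    | zero => simp
    | add S T hS hT => simp only [map_add, hS, hT]
    | tmul e f =>
      simp only [comp_apply, map_tmul, flip_apply, TensorProduct.mk_apply, rTensor_tmul]
      induction hD.comul e with
      | zero => simp
      | add S T hS hT => simp only [map_add, add_tmul, hS, hT]
      | tmul e₁ e₂ => simp [Φ]
  rw [hL, ← hD.coassoc, hR]

/-- Coassociativity regroups the legs of `d₍₁₎ ⊗ d₍₂₎ ⊗ d₍₃₎` so that the condition for `W`
applies to the last two legs, and then the condition for `V` to the first two. -/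
theorem IsYetterDrinfeld.tensor (hb : hD.IsYetterDrinfeld b σ) (hc : hD.IsYetterDrinfeld c τ) :
    hD.IsYetterDrinfeld (hD.tensorAct b c) (tensorCoact σ τ) := by
  refine TensorProduct.ext_threefold' fun d v w => ?_
  simp only [comp_apply, rTensor_tmul]
  rw [ydLeft_tensor_comul_tmul, show ydLeft c τ ∘ₗ rTensor W hD.comul = _ from hc,
    mulLegs_map_ydRight_comul, show ydLeft b σ ∘ₗ rTensor V hD.comul = _ from hb,
    ydRight_tensor_comul_tmul]

end YetterDrinfeld

section Braiding

variable {hD : RegularMultiplierHopf K D}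
variable {b : D →ₗ[K] V →ₗ[K] V} {c : D →ₗ[K] W →ₗ[K] W}
variable {ρ : V →ₗ[K] D ⊗[K] V} {σ : W →ₗ[K] D ⊗[K] W}

theorem isActionHom_braiding (hb : ∀ d d' v, b (d * d') v = b d (b d' v))
    (hσ : hD.IsYetterDrinfeld c σ) :
    IsActionHom (hD.tensorAct c b) (hD.tensorAct b c) (braiding b σ) := by
  intro d t
  induction t with
  | zero => simp
  | add s t hs ht => simp only [map_add, hs, ht]
  | tmul w v =>
    have hL : ∀ T, braiding b σ (map (c.flip w) (b.flip v) T)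
        = actOn b (ydLeft c σ (T ⊗ₜ w) ⊗ₜ v) := by
      intro T
      induction T with
      | zero => simp
      | add S T hS hT => simp only [map_add, add_tmul, hS, hT]
      | tmul e f =>
        simp only [map_tmul, flip_apply, braiding_tmul, ydLeft_tmul]
        induction σ (c e w) with
        | zero => simp
        | add P Q hP hQ => simp only [map_add, add_tmul, hP, hQ]
        | tmul h w' => simp [hb]
    have hR : ∀ T, actOn b (ydRight c σ (T ⊗ₜ w) ⊗ₜ v)
        = homTensorHomMap (RingHom.id K) V W V W (map b c T) (actOn b (σ w ⊗ₜ v)) := by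
      intro T
      induction T with
      | zero => simp
      | add S T hS hT => simp only [map_add, add_tmul, LinearMap.add_apply, hS, hT]
      | tmul e f =>
        simp only [ydRight_tmul, map_tmul, homTensorHomMap_apply]
        induction σ w with
        | zero => simp
        | add P Q hP hQ => simp only [map_add, add_tmul, hP, hQ]
        | tmul h w' => simp [hb]
    rw [tensorAct_tmul, hL, show ydLeft c σ (hD.comul d ⊗ₜ w) = ydRight c σ (hD.comul d ⊗ₜ w)
      from congrArg (· (d ⊗ₜ w)) hσ, hR]
    rfl

theorem tensorCoact_braiding_tmul (hσ : hD.IsCoassociative σ) (w : W) (v : V) :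
    tensorCoact ρ σ (braiding b σ (w ⊗ₜ v)) = TensorProduct.assoc K D V W (rTensor W
      ((ydLeft b ρ ∘ₗ rTensor V hD.comul) ∘ₗ (TensorProduct.mk K D V).flip v) (σ w)) := by
  let Φ := mulLegs ∘ₗ map (ρ ∘ₗ b.flip v) (LinearMap.id : D ⊗[K] W →ₗ[K] D ⊗[K] W)
  have hL : ∀ P, tensorCoact ρ σ (actOn b (P ⊗ₜ v)) = Φ (lTensor D σ P) := by
    intro P
    induction P with
    | zero => simp
    | add P Q hP hQ => simp only [map_add, add_tmul, hP, hQ]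
    | tmul g w' => simp [Φ, tensorCoact_tmul]
  have hR : ∀ P, TensorProduct.assoc K D V W (rTensor W
      ((ydLeft b ρ ∘ₗ rTensor V hD.comul) ∘ₗ (TensorProduct.mk K D V).flip v) P)
        = Φ (TensorProduct.assoc K D D W (rTensor W hD.comul P)) := by
    intro P
    induction P with
    | zero => simp
    | add P Q hP hQ => simp only [map_add, hP, hQ]
    | tmul g w' =>
      simp only [rTensor_tmul, comp_apply, flip_apply, TensorProduct.mk_apply]
      induction hD.comul g with
      | zero => simp
      | add S T hS hT => simp only [map_add, add_tmul, hS, hT]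
      | tmul g₁ g₂ =>
        simp only [Φ, assoc_tmul, comp_apply, map_tmul, flip_apply, id_apply, ydLeft_tmul]
        induction ρ (b g₁ v) with
        | zero => simp
        | add P Q hP hQ => simp only [map_add, add_tmul, hP, hQ]
        | tmul h v' => simp
  rw [braiding_tmul, hL, ← hσ, hR]

theorem lTensor_braiding_tensorCoact_tmul (hσ : hD.IsCoassociative σ) (w : W) (v : V) :
    lTensor D (braiding b σ) (tensorCoact σ ρ (w ⊗ₜ v)) = TensorProduct.assoc K D V W (rTensor W
      ((ydRight b ρ ∘ₗ rTensor V hD.comul) ∘ₗ (TensorProduct.mk K D V).flip v) (σ w)) := by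
  let Φ := lTensor D (actOn b) ∘ₗ mulLegs ∘ₗ
    (TensorProduct.mk K (D ⊗[K] (D ⊗[K] W)) (D ⊗[K] V)).flip (ρ v)
  have hL : ∀ P, lTensor D (braiding b σ) (mulLegs (P ⊗ₜ ρ v)) = Φ (lTensor D σ P) := by
    intro P
    induction P with
    | zero => simp
    | add P Q hP hQ => simp only [map_add, add_tmul, hP, hQ]
    | tmul g w' =>
      simp only [Φ, lTensor_tmul, comp_apply, flip_apply, TensorProduct.mk_apply]
      induction ρ v with
      | zero => simp
      | add P Q hP hQ => simp only [map_add, tmul_add, hP, hQ]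
      | tmul h v' => simp [braiding_tmul]
  have hR : ∀ P, TensorProduct.assoc K D V W (rTensor W
      ((ydRight b ρ ∘ₗ rTensor V hD.comul) ∘ₗ (TensorProduct.mk K D V).flip v) P)
        = Φ (TensorProduct.assoc K D D W (rTensor W hD.comul P)) := by
    intro P
    induction P with
    | zero => simp
    | add P Q hP hQ => simp only [map_add, hP, hQ]
    | tmul g w' =>
      simp only [rTensor_tmul, comp_apply, flip_apply, TensorProduct.mk_apply]
      induction hD.comul g with
      | zero => simp
      | add S T hS hT => simp only [map_add, add_tmul, hS, hT]
      | tmul g₁ g₂ =>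
        simp only [Φ, assoc_tmul, comp_apply, flip_apply, TensorProduct.mk_apply, ydRight_tmul]
        induction ρ v with
        | zero => simp
        | add P Q hP hQ => simp only [map_add, add_tmul, tmul_add, hP, hQ]
        | tmul h v' => simp
  rw [tensorCoact_tmul, hL, ← hσ, hR]

theorem isCoactionHom_braiding (hb : hD.IsYetterDrinfeld b ρ) (hσ : hD.IsCoassociative σ) :
    IsCoactionHom (tensorCoact σ ρ) (tensorCoact ρ σ) (braiding b σ) := by
  intro t
  induction t with
  | zero => simp
  | add s t hs ht => simp only [map_add, hs, ht]
  | tmul w v =>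
    rw [tensorCoact_braiding_tmul hσ, show ydLeft b ρ ∘ₗ rTensor V hD.comul = _ from hb,
      lTensor_braiding_tensorCoact_tmul hσ]

end Braiding

end RegularMultiplierHopf

namespace YetterDrinfeldModuleAlgebra

open RegularMultiplierHopf

variable {K : Type} [Field K]
variable {D : Type} [NonUnitalRing D] [Module K D] [SMulCommClass K D D] [IsScalarTower K D D]
variable {X : Type} [NonUnitalRing X] [Module K X] [SMulCommClass K X X] [IsScalarTower K X X]
variable {Y : Type} [NonUnitalRing Y] [Module K Y] [SMulCommClass K Y Y] [IsScalarTower K Y Y]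
variable {hD : RegularMultiplierHopf K D}
variable (XA : YetterDrinfeldModuleAlgebra K D X hD) (YA : YetterDrinfeldModuleAlgebra K D Y hD)

theorem act_mul_eq (d : D) (x x' : X) :
    XA.act d (x * x') = mul' K X (map (XA.act.flip x) (XA.act.flip x') (hD.comul d)) := by
  obtain ⟨n, d₁, d₂, hd⟩ := exists_sum_range_tmul (hD.comul d)
  rw [XA.act_mul d _ d₁ d₂ hd, hd]
  simp

theorem isActionHom_mul' : IsActionHom (hD.tensorAct XA.act XA.act) XA.act (mul' K X) := by
  intro d t
  induction t with
  | zero => simp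
  | add s t hs ht => simp only [map_add, hs, ht]
  | tmul x x' => rw [tensorAct_tmul, mul'_apply, act_mul_eq]

theorem isCoactionHom_mul' :
    IsCoactionHom (tensorCoact XA.coact XA.coact) XA.coact (mul' K X) := by
  intro t
  induction t with
  | zero => simp
  | add s t hs ht => simp only [map_add, hs, ht]
  | tmul x x' => rw [mul'_apply, XA.coact_mul, tensorCoact_tmul, lTensor_mul'_mulLegs]

theorem isYetterDrinfeld : hD.IsYetterDrinfeld XA.act XA.coact :=
  isYetterDrinfeld_iff.mpr XA.yd

def braidedMulMap : (X ⊗[K] Y) ⊗[K] (X ⊗[K] Y) →ₗ[K] X ⊗[K] Y :=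
  map (mul' K X) (mul' K Y) ∘ₗ (TensorProduct.assoc K X X (Y ⊗[K] Y)).symm.toLinearMap ∘ₗ
    lTensor X (TensorProduct.assoc K X Y Y).toLinearMap ∘ₗ
    lTensor X (rTensor Y (braiding XA.act YA.coact)) ∘ₗ
    lTensor X (TensorProduct.assoc K Y X Y).symm.toLinearMap ∘ₗ
    (TensorProduct.assoc K X Y (X ⊗[K] Y)).toLinearMap

def braidedMul : X ⊗[K] Y →ₗ[K] X ⊗[K] Y →ₗ[K] X ⊗[K] Y :=
  TensorProduct.curry (braidedMulMap XA YA)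

theorem isActionHom_braidedMulMap :
    IsActionHom (hD.tensorAct (hD.tensorAct XA.act YA.act) (hD.tensorAct XA.act YA.act))
      (hD.tensorAct XA.act YA.act) (braidedMulMap XA YA) :=
  ((isActionHom_mul' XA).map (isActionHom_mul' YA)).comp <| isActionHom_assoc.symm.comp <|
    (isActionHom_id.map isActionHom_assoc).comp <|
    (isActionHom_id.map ((isActionHom_braiding XA.act_act YA.isYetterDrinfeld).map
      isActionHom_id)).comp <|
    (isActionHom_id.map isActionHom_assoc.symm).comp isActionHom_assoc

theorem isCoactionHom_braidedMulMap :
    IsCoactionHom (tensorCoact (tensorCoact XA.coact YA.coact) (tensorCoact XA.coact YA.coact))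
      (tensorCoact XA.coact YA.coact) (braidedMulMap XA YA) :=
  ((isCoactionHom_mul' XA).map (isCoactionHom_mul' YA)).comp <|
    isCoactionHom_assoc.symm.comp <| (isCoactionHom_id.map isCoactionHom_assoc).comp <|
    (isCoactionHom_id.map ((isCoactionHom_braiding XA.isYetterDrinfeld YA.coact_coassoc).map
      isCoactionHom_id)).comp <|
    (isCoactionHom_id.map isCoactionHom_assoc.symm).comp isCoactionHom_assoc

theorem braidedMul_tmul_tmul (x x' : X) (y y' : Y) :
    braidedMul XA YA (x ⊗ₜ y) (x' ⊗ₜ y')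
      = map (mulLeft K x) (mulRight K y') (braiding XA.act YA.coact (y ⊗ₜ x')) := by
  simp only [braidedMul, curry_apply, braidedMulMap, comp_apply, LinearEquiv.coe_coe,
    assoc_tmul, lTensor_tmul, assoc_symm_tmul, rTensor_tmul]
  induction braiding XA.act YA.coact (y ⊗ₜ x') with
  | zero => simp
  | add s t hs ht => simp only [add_tmul, tmul_add, map_add, hs, ht]
  | tmul a b => simp

def leftBraidMul (y : Y) : X ⊗[K] Y →ₗ[K] X ⊗[K] Y :=
  lTensor X (mul' K Y) ∘ₗ (TensorProduct.assoc K X Y Y).toLinearMap ∘ₗ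
    rTensor Y (braiding XA.act YA.coact ∘ₗ TensorProduct.mk K Y X y)

def rightBraidMul (x' : X) : X ⊗[K] Y →ₗ[K] X ⊗[K] Y :=
  rTensor Y (mul' K X) ∘ₗ (TensorProduct.assoc K X X Y).symm.toLinearMap ∘ₗ
    lTensor X (braiding XA.act YA.coact ∘ₗ (TensorProduct.mk K Y X).flip x')

theorem leftBraidMul_tmul (y b : Y) (a : X) :
    leftBraidMul XA YA y (a ⊗ₜ b)
      = lTensor X (mulRight K b) (braiding XA.act YA.coact (y ⊗ₜ a)) := by
  simp only [leftBraidMul, comp_apply, rTensor_tmul, TensorProduct.mk_apply]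
  induction braiding XA.act YA.coact (y ⊗ₜ a) with
  | zero => simp
  | add s t hs ht => simp only [add_tmul, map_add, hs, ht]
  | tmul u v => simp

theorem rightBraidMul_tmul (x' a : X) (b : Y) :
    rightBraidMul XA YA x' (a ⊗ₜ b)
      = rTensor Y (mulLeft K a) (braiding XA.act YA.coact (b ⊗ₜ x')) := by
  simp only [rightBraidMul, comp_apply, lTensor_tmul, flip_apply, TensorProduct.mk_apply]
  induction braiding XA.act YA.coact (b ⊗ₜ x') with
  | zero => simp
  | add s t hs ht => simp only [tmul_add, map_add, hs, ht]
  | tmul u v => simp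

theorem braiding_mul_tmul (y y' : Y) (x : X) :
    braiding XA.act YA.coact ((y * y') ⊗ₜ x)
      = leftBraidMul XA YA y (braiding XA.act YA.coact (y' ⊗ₜ x)) := by
  rw [braiding_tmul, braiding_tmul, YA.coact_mul]
  induction YA.coact y' with
  | zero => simp
  | add P Q hP hQ => simp only [mul_add, add_tmul, map_add, hP, hQ]
  | tmul h z =>
    rw [actOn_tmul, leftBraidMul_tmul, braiding_tmul]
    induction YA.coact y with
    | zero => simp
    | add P Q hP hQ => simp only [add_mul, add_tmul, map_add, hP, hQ]
    | tmul g w => simp [XA.act_act]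

theorem braiding_tmul_mul (y : Y) (x x' : X) :
    braiding XA.act YA.coact (y ⊗ₜ (x * x'))
      = rightBraidMul XA YA x' (braiding XA.act YA.coact (y ⊗ₜ x)) := by
  let Φ := rTensor Y (mul' K X) ∘ₗ (TensorProduct.assoc K X X Y).symm.toLinearMap ∘ₗ
    map (XA.act.flip x) (actOn XA.act ∘ₗ (TensorProduct.mk K (D ⊗[K] Y) X).flip x')
  have hL : ∀ P, actOn XA.act (P ⊗ₜ (x * x'))
      = Φ (TensorProduct.assoc K D D Y (rTensor Y hD.comul P)) := by
    intro P
    induction P with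
    | zero => simp
    | add P Q hP hQ => simp only [add_tmul, map_add, hP, hQ]
    | tmul g z =>
      rw [actOn_tmul, act_mul_eq, rTensor_tmul]
      induction hD.comul g with
      | zero => simp
      | add S T hS hT => simp only [add_tmul, map_add, hS, hT]
      | tmul g₁ g₂ => simp [Φ]
  have hR : ∀ P, rightBraidMul XA YA x' (actOn XA.act (P ⊗ₜ x)) = Φ (lTensor D YA.coact P) := by
    intro P
    induction P with
    | zero => simp
    | add P Q hP hQ => simp only [add_tmul, map_add, hP, hQ]
    | tmul g z => simp [Φ, rightBraidMul, braiding_tmul]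
  rw [braiding_tmul, braiding_tmul, hL, YA.coact_coassoc, hR]

theorem braidedMul_assoc_tmul (x x' x'' : X) (y y' y'' : Y) :
    braidedMul XA YA (braidedMul XA YA (x ⊗ₜ y) (x' ⊗ₜ y')) (x'' ⊗ₜ y'')
      = braidedMul XA YA (x ⊗ₜ y) (braidedMul XA YA (x' ⊗ₜ y') (x'' ⊗ₜ y'')) := by
  obtain ⟨S, hS⟩ := exists_finset (braiding XA.act YA.coact (y' ⊗ₜ x''))
  have hR : braidedMul XA YA (x ⊗ₜ y) (braidedMul XA YA (x' ⊗ₜ y') (x'' ⊗ₜ y''))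
      = ∑ p ∈ S, map (mulLeft K x) (mulRight K (p.2 * y''))
          (rightBraidMul XA YA p.1 (braiding XA.act YA.coact (y ⊗ₜ x'))) := by
    rw [braidedMul_tmul_tmul XA YA x' x'' y' y'', hS, map_sum, map_sum]
    refine Finset.sum_congr rfl fun p _ => ?_
    rw [map_tmul, mulLeft_apply, mulRight_apply, braidedMul_tmul_tmul, braiding_tmul_mul]
  rw [hR, braidedMul_tmul_tmul XA YA x x' y y']
  induction braiding XA.act YA.coact (y ⊗ₜ x') with
  | zero => simp
  | add s t hs ht => simp only [map_add, LinearMap.add_apply, hs, ht, Finset.sum_add_distrib]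
  | tmul a b =>
    rw [map_tmul, mulLeft_apply, mulRight_apply, braidedMul_tmul_tmul, braiding_mul_tmul, hS,
      map_sum, map_sum]
    refine Finset.sum_congr rfl fun p _ => ?_
    rw [leftBraidMul_tmul, rightBraidMul_tmul]
    induction braiding XA.act YA.coact (b ⊗ₜ p.1) with
    | zero => simp
    | add s t hs ht => simp only [map_add, hs, ht]
    | tmul u v => simp [mul_assoc]

theorem braidedMul_assoc (u v w : X ⊗[K] Y) :
    braidedMul XA YA (braidedMul XA YA u v) w = braidedMul XA YA u (braidedMul XA YA v w) := by
  induction u with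
  | zero => simp
  | add u u' hu hu' => simp only [map_add, LinearMap.add_apply, hu, hu']
  | tmul x y =>
    induction v with
    | zero => simp
    | add v v' hv hv' => simp only [map_add, LinearMap.add_apply, hv, hv']
    | tmul x' y' =>
      induction w with
      | zero => simp
      | add w w' hw hw' => simp only [map_add, hw, hw']
      | tmul x'' y'' => exact braidedMul_assoc_tmul XA YA x x' x'' y y' y''

end YetterDrinfeldModuleAlgebra

open RegularMultiplierHopf YetterDrinfeldModuleAlgebra in
/-- Let `D` be a regular multiplier Hopf algebra and let `X` and `Y` be
two (left-left) Yetter-Drinfel'd `D`-module algebras.  Then their braided product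
`X ∝ Y`, namely the vector space `X ⊗ Y` with product
`(x ∝ y)(x' ∝ y') = x(y₍₋₁₎ · x') ∝ y₍₀₎ y'`,
is again a (left-left) Yetter-Drinfel'd `D`-module algebra with the tensor product
action `d · (x ⊗ y) = d₍₁₎ · x ⊗ d₍₂₎ · y` and coaction `x ⊗ y ↦ x₍₋₁₎ y₍₋₁₎ ⊗ (x₍₀₎ ⊗ y₍₀₎)`. -/
theorem braided_product_yetter_drinfeld_module_algebra
    {K : Type} [Field K]
    {D : Type} [NonUnitalRing D] [Module K D] [SMulCommClass K D D] [IsScalarTower K D D]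
    {X : Type} [NonUnitalRing X] [Module K X] [SMulCommClass K X X] [IsScalarTower K X X]
    {Y : Type} [NonUnitalRing Y] [Module K Y] [SMulCommClass K Y Y] [IsScalarTower K Y Y]
    (hD : RegularMultiplierHopf K D)
    (XA : YetterDrinfeldModuleAlgebra K D X hD)
    (YA : YetterDrinfeldModuleAlgebra K D Y hD) :
    ∃ (bmul : (X ⊗[K] Y) →ₗ[K] (X ⊗[K] Y) →ₗ[K] (X ⊗[K] Y))
      (tact : D →ₗ[K] (X ⊗[K] Y) →ₗ[K] (X ⊗[K] Y))
      (tcoact : (X ⊗[K] Y) →ₗ[K] D ⊗[K] (X ⊗[K] Y)),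
      -- the braided product `(x ∝ y)(x' ∝ y') = x(y₍₋₁₎ · x') ∝ y₍₀₎ y'`
      (∀ (x x' : X) (y y' : Y) (s : Finset ℕ) (yc : ℕ → D) (y0 : ℕ → Y),
        YA.coact y = ∑ k ∈ s, yc k ⊗ₜ[K] y0 k →
        bmul (x ⊗ₜ[K] y) (x' ⊗ₜ[K] y')
          = ∑ k ∈ s, (x * XA.act (yc k) x') ⊗ₜ[K] (y0 k * y')) ∧
      -- the tensor product action `d · (x ⊗ y) = (d₍₁₎ · x) ⊗ (d₍₂₎ · y)`
      (∀ (d : D) (s : Finset ℕ) (d1 d2 : ℕ → D),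
        hD.comul d = ∑ i ∈ s, d1 i ⊗ₜ[K] d2 i →
        ∀ (x : X) (y : Y),
          tact d (x ⊗ₜ[K] y) = ∑ i ∈ s, (XA.act (d1 i) x) ⊗ₜ[K] (YA.act (d2 i) y)) ∧
      -- the tensor product coaction `x ⊗ y ↦ x₍₋₁₎ y₍₋₁₎ ⊗ (x₍₀₎ ⊗ y₍₀₎)`
      (∀ (x : X) (y : Y) (s t : Finset ℕ)
          (xc : ℕ → D) (x0 : ℕ → X) (yc : ℕ → D) (y0 : ℕ → Y),
        XA.coact x = ∑ i ∈ s, xc i ⊗ₜ[K] x0 i →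
        YA.coact y = ∑ j ∈ t, yc j ⊗ₜ[K] y0 j →
        tcoact (x ⊗ₜ[K] y)
          = ∑ i ∈ s, ∑ j ∈ t, (xc i * yc j) ⊗ₜ[K] (x0 i ⊗ₜ[K] y0 j)) ∧
      -- the braided product is associative
      (∀ u v w : X ⊗[K] Y, bmul (bmul u v) w = bmul u (bmul v w)) ∧
      -- `X ∝ Y` is a unital `D`-module
      (∀ (d d' : D) (u : X ⊗[K] Y), tact (d * d') u = tact d (tact d' u)) ∧
      Submodule.span K {v : X ⊗[K] Y | ∃ (d : D) (u : X ⊗[K] Y), tact d u = v} = ⊤ ∧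
      -- `X ∝ Y` is a `D`-module algebra
      (∀ (d : D) (s : Finset ℕ) (d1 d2 : ℕ → D),
        hD.comul d = ∑ i ∈ s, d1 i ⊗ₜ[K] d2 i →
        ∀ u v : X ⊗[K] Y,
          tact d (bmul u v) = ∑ i ∈ s, bmul (tact (d1 i) u) (tact (d2 i) v)) ∧
      -- `X ∝ Y` is a `D`-comodule
      (∀ u : X ⊗[K] Y,
        (TensorProduct.assoc K D D (X ⊗[K] Y))
            ((LinearMap.rTensor (X ⊗[K] Y) hD.comul) (tcoact u))
          = (LinearMap.lTensor D tcoact) (tcoact u)) ∧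
      (∀ u : X ⊗[K] Y,
        (TensorProduct.lid K (X ⊗[K] Y))
          ((LinearMap.rTensor (X ⊗[K] Y) hD.counit) (tcoact u)) = u) ∧
      -- `X ∝ Y` is a `D`-comodule algebra
      (∀ (u v : X ⊗[K] Y) (s t : Finset ℕ)
          (g g' : ℕ → D) (w w' : ℕ → X ⊗[K] Y),
        tcoact u = ∑ k ∈ s, g k ⊗ₜ[K] w k →
        tcoact v = ∑ l ∈ t, g' l ⊗ₜ[K] w' l →
        tcoact (bmul u v)
          = ∑ k ∈ s, ∑ l ∈ t, (g k * g' l) ⊗ₜ[K] (bmul (w k) (w' l))) ∧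
      -- the Yetter-Drinfel'd compatibility condition
      (∀ (d : D) (s : Finset ℕ) (d1 d2 : ℕ → D),
        hD.comul d = ∑ i ∈ s, d1 i ⊗ₜ[K] d2 i →
        ∀ (d' : D) (u : X ⊗[K] Y),
          ∑ i ∈ s, (LinearMap.rTensor (X ⊗[K] Y) (LinearMap.mulRight K (d2 i * d')))
              (tcoact (tact (d1 i) u))
            = ∑ i ∈ s, (TensorProduct.map
                ((LinearMap.mulLeft K (d1 i)) ∘ₗ (LinearMap.mulRight K d'))
                (tact (d2 i))) (tcoact u)) := by
  refine ⟨braidedMul XA YA, hD.tensorAct XA.act YA.act, tensorCoact XA.coact YA.coact,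
    ?_, ?_, ?_, braidedMul_assoc XA YA, tensorAct_mul XA.act_act YA.act_act,
    span_tensorAct_eq_top YA.act_act XA.act_unital YA.act_unital,
    fun d s d1 d2 hd u v => (isActionHom_braidedMulMap XA YA).apply_tensorAct_tmul hd u v,
    IsCoassociative.tensorCoact XA.coact_coassoc YA.coact_coassoc,
    IsCounital.tensorCoact XA.coact_counit YA.coact_counit,
    fun u v s t g g' w w' hu hv => (isCoactionHom_braidedMulMap XA YA).apply_tmul hu hv,
    isYetterDrinfeld_iff.mp ((isYetterDrinfeld XA).tensor (isYetterDrinfeld YA))⟩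
  · intro x x' y y' s yc y0 hy
    rw [braidedMul_tmul_tmul, braiding_tmul, hy]
    simp [sum_tmul]
  · intro d s d1 d2 hd x y
    rw [tensorAct_tmul, hd]
    simp
  · intro x y s t xc x0 yc y0 hx hy
    rw [tensorCoact_tmul, hx, hy, sum_tmul, map_sum]
    simp [tmul_sum]
end

section
/- Let G be a group, 𝓓 = K(G) ⋈ K[G] the Drinfel'd double and 𝓗 = K(G) # K[G] the Heisenberg double. The action (δ_p ⋈ q)·(δ_{p'} # q') = δ_{p'q'q^{-1}p} δ_{p'q^{-1}} # qq'q^{-1} and the coaction Γ(δ_p # q) = Σ_{s∈G} (δ_{s^{-1}p} ⋈ q) ⊗ (δ_s # q) make K(G) # K[G] a (left-left) Yetter-Drinfel'd module algebra over K(G) ⋈ K[G]. -/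
open TensorProduct LinearMap
open scoped TensorProduct

section GroupCase

variable (K : Type) [Field K] (G : Type) [Group G]

/-- The Dirac function `δ_p ∈ K(G)`, where `K(G)` is modelled as the non-unital algebra
`G →₀ K` of finitely supported `K`-valued functions on `G` with the pointwise product.
`K(G)` is the motivating example of a regular multiplier Hopf algebra, with
`Δ(δ_p) = ∑_{s ∈ G} δ_s ⊗ δ_{s⁻¹p}`. -/
noncomputable def dirac (p : G) : G →₀ K := Finsupp.single p 1

/-- The group element `q` viewed in the group algebra `B = K[G]`. -/
noncomputable def grp (q : G) : MonoidAlgebra K G := MonoidAlgebra.single q 1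

/-- The left regular action of a group element `q ∈ K[G]` on `K(G)`, determined by the
pairing `⟨δ_p, g⟩ = δ_{p,g}`:  `q ▶ δ_p = δ_{pq⁻¹}`. -/
noncomputable def lreg (q : G) : (G →₀ K) →ₗ[K] (G →₀ K) :=
  Finsupp.lmapDomain K K (fun p => p * q⁻¹)

/-- Pure tensors `δ_p ⊗ q`, the spanning elements of the Drinfel'd double
`𝓓 = K(G) ⋈ K[G]` and of the Heisenberg double `𝓗 = K(G) # K[G]` (both have underlying
vector space `K(G) ⊗ K[G]`). -/
noncomputable def dd (p q : G) : (G →₀ K) ⊗[K] MonoidAlgebra K G :=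
  dirac K G p ⊗ₜ[K] grp K G q

end GroupCase

/-- The common underlying vector space `K(G) ⊗ K[G]` of the Drinfel'd double
`𝓓 = K(G) ⋈ K[G]` and of the Heisenberg double `𝓗 = K(G) # K[G]`. -/
abbrev DH (K : Type) [Field K] (G : Type) [Group G] :=
  (G →₀ K) ⊗[K] MonoidAlgebra K G
/-!
Every structure map sends a pair of basis tensors `δ_p ⊗ q` to a basis tensor or to `0`, so
each axiom, being multilinear, only has to be checked on basis tensors, where it becomes a
bookkeeping of equations in `G`. The sums `∑ᶠ` over `G` in the coaction, the module-algebra and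
the Yetter-Drinfel'd conditions cause no trouble: on a basis tensor only one of their terms is
nonzero, so they are linear in the remaining argument and can be checked on the basis as well.
-/

theorem eq_mul_inv_of_inv_mul_eq {H : Type*} [Group H] {s p x : H} (h : s⁻¹ * p = x) :
    s = p * x⁻¹ := by
  rw [← h]; group

theorem eq_inv_mul_mul_of_mul_mul_inv_eq {H : Type*} [Group H] {c x y : H}
    (h : c * x * c⁻¹ = y) : x = c⁻¹ * y * c := by
  rw [← h]; group

theorem Finsupp.smul_mul_smul {α R : Type*} [CommSemiring R] (c c' : R) (f f' : α →₀ R) :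
    (c • f) * (c' • f') = (c * c') • (f * f') := by
  ext
  simp only [Finsupp.mul_apply, Finsupp.smul_apply, smul_eq_mul]
  ring

section FinsumLinearMap

variable {R V M ι κ : Type*} [Semiring R] [AddCommMonoid V] [Module R V]
  [AddCommMonoid M] [Module R M]

theorem Module.Basis.finite_support_apply (b : Module.Basis ι R V) {F : κ → V →ₗ[R] M}
    (hF : ∀ i, (Function.support fun s => F s (b i)).Finite) (v : V) :
    (Function.support fun s => F s v).Finite := by
  have hv : v ∈ Submodule.span R (Set.range b) := by simp [b.span_eq]
  induction hv using Submodule.span_induction with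
  | mem x hx => obtain ⟨i, rfl⟩ := hx; exact hF i
  | zero => simp
  | add x y _ _ hx hy =>
    simp only [map_add]
    exact (hx.union hy).subset (Function.support_add _ _)
  | smul c x _ hx =>
    simp only [map_smul]
    exact hx.subset (Function.support_const_smul_subset c _)

noncomputable def finsumLinearMap (F : κ → V →ₗ[R] M)
    (hF : ∀ v, (Function.support fun s => F s v).Finite) : V →ₗ[R] M where
  toFun v := ∑ᶠ s, F s v
  map_add' x y := by simp only [map_add]; exact finsum_add_distrib (hF x) (hF y)
  map_smul' c x := by simp only [map_smul]; exact (smul_finsum' c (hF x)).symm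

theorem finsumLinearMap_apply (F : κ → V →ₗ[R] M)
    (hF : ∀ v, (Function.support fun s => F s v).Finite) (v : V) :
    finsumLinearMap F hF v = ∑ᶠ s, F s v := rfl

theorem Module.Basis.finite_support_apply_of_single (b : Module.Basis ι R V)
    {F : κ → V →ₗ[R] M} (σ : ι → κ) (hF : ∀ i s, s ≠ σ i → F s (b i) = 0) (v : V) :
    (Function.support fun s => F s v).Finite :=
  b.finite_support_apply (fun i =>
    (Set.finite_singleton (σ i)).subset fun s hs => by_contra fun h => hs (hF i s h)) v

theorem Module.Basis.finsum_apply_eq_of_single (b : Module.Basis ι R V) (F : κ → V →ₗ[R] M)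
    (Ψ : V →ₗ[R] M) (σ : ι → κ) (hF : ∀ i s, s ≠ σ i → F s (b i) = 0)
    (hΨ : ∀ i, F (σ i) (b i) = Ψ (b i)) (v : V) : ∑ᶠ s, F s v = Ψ v := by
  refine LinearMap.congr_fun (b.ext fun i => ?_ :
    finsumLinearMap F (b.finite_support_apply_of_single σ hF) = Ψ) v
  rw [finsumLinearMap_apply, finsum_eq_single _ (σ i) (hF i), hΨ]

theorem Module.Basis.finsum_apply_eq_finsum_apply_of_single (b : Module.Basis ι R V)
    (F F' : κ → V →ₗ[R] M) (σ σ' : ι → κ) (hF : ∀ i s, s ≠ σ i → F s (b i) = 0)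
    (hF' : ∀ i s, s ≠ σ' i → F' s (b i) = 0) (h : ∀ i, F (σ i) (b i) = F' (σ' i) (b i))
    (v : V) : ∑ᶠ s, F s v = ∑ᶠ s, F' s v :=
  b.finsum_apply_eq_of_single F (finsumLinearMap F' (b.finite_support_apply_of_single σ' hF'))
    σ hF (fun i => by rw [h, finsumLinearMap_apply, finsum_eq_single _ (σ' i) (hF' i)]) v

end FinsumLinearMap

namespace GroupDouble

open scoped Classical

section Basis

variable (K : Type) [Field K] (G : Type) [Group G]

noncomputable def ddBasis : Module.Basis (G × G) K (DH K G) :=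
  Finsupp.basisSingleOne.tensorProduct (MonoidAlgebra.basis G K)

@[simp] theorem ddBasis_apply (x : G × G) : ddBasis K G x = dd K G x.1 x.2 := by
  simp [ddBasis, Module.Basis.tensorProduct_apply', dd, dirac, grp]

variable {K G} {M : Type} [AddCommMonoid M] [Module K M]

theorem linearMap_ext {f g : DH K G →ₗ[K] M} (h : ∀ p q, f (dd K G p q) = g (dd K G p q)) :
    f = g :=
  (ddBasis K G).ext fun x => by simpa using h x.1 x.2

variable (K G) in
noncomputable def liftDD (f : G → G → M) : DH K G →ₗ[K] M :=
  (ddBasis K G).constr K fun x => f x.1 x.2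

@[simp] theorem liftDD_dd (f : G → G → M) (p q : G) : liftDD K G f (dd K G p q) = f p q := by
  simpa [liftDD] using (ddBasis K G).constr_basis K (fun x => f x.1 x.2) (p, q)

variable (K G) in
noncomputable def liftDD₂ (f : G → G → G → G → M) : DH K G →ₗ[K] DH K G →ₗ[K] M :=
  liftDD K G fun a b => liftDD K G (f a b)

@[simp] theorem liftDD₂_dd (f : G → G → G → G → M) (a b p q : G) :
    liftDD₂ K G f (dd K G a b) (dd K G p q) = f a b p q := by
  simp [liftDD₂]

theorem finsum_apply_eq_of_single_dd {κ : Type} (F : κ → DH K G →ₗ[K] M) (Ψ : DH K G →ₗ[K] M)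
    (σ : G → G → κ) (hF : ∀ a b s, s ≠ σ a b → F s (dd K G a b) = 0)
    (hΨ : ∀ a b, F (σ a b) (dd K G a b) = Ψ (dd K G a b)) (v : DH K G) :
    ∑ᶠ s, F s v = Ψ v :=
  (ddBasis K G).finsum_apply_eq_of_single F Ψ (fun x => σ x.1 x.2)
    (fun x s hs => by simpa using hF x.1 x.2 s hs) (fun x => by simpa using hΨ x.1 x.2) v

theorem finsum_apply_eq_finsum_apply_of_single_dd {κ : Type} (F F' : κ → DH K G →ₗ[K] M)
    (σ σ' : G → G → κ) (hF : ∀ a b s, s ≠ σ a b → F s (dd K G a b) = 0)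
    (hF' : ∀ a b s, s ≠ σ' a b → F' s (dd K G a b) = 0)
    (h : ∀ a b, F (σ a b) (dd K G a b) = F' (σ' a b) (dd K G a b)) (v : DH K G) :
    ∑ᶠ s, F s v = ∑ᶠ s, F' s v :=
  (ddBasis K G).finsum_apply_eq_finsum_apply_of_single F F' (fun x => σ x.1 x.2)
    (fun x => σ' x.1 x.2) (fun x s hs => by simpa using hF x.1 x.2 s hs)
    (fun x s hs => by simpa using hF' x.1 x.2 s hs) (fun x => by simpa using h x.1 x.2) v

end Basis

section Dirac

variable {K : Type} [Field K] {G : Type}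

theorem dirac_mul_dirac (p r : G) :
    dirac K G p * dirac K G r = if p = r then dirac K G p else 0 := by
  ext x
  simp only [dirac, Finsupp.mul_apply, Finsupp.single_apply]
  split_ifs <;> simp_all

theorem single_eq_smul_dirac (p : G) (c : K) : Finsupp.single p c = c • dirac K G p := by
  simp [dirac]

theorem dirac_tmul_grp (p q : G) : dirac K G p ⊗ₜ[K] grp K G q = dd K G p q := rfl

variable [Group G]

theorem lreg_dirac (q p : G) : lreg K G q (dirac K G p) = dirac K G (p * q⁻¹) := by
  simp [lreg, dirac]

theorem grp_mul_grp (q q' : G) : grp K G q * grp K G q' = grp K G (q * q') := by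
  simp [grp, MonoidAlgebra.single_mul_single]

end Dirac

variable (K : Type) [Field K] (G : Type) [Group G]

noncomputable def drinfeldMul : DH K G →ₗ[K] DH K G →ₗ[K] DH K G :=
  liftDD₂ K G fun g h p q => (dirac K G g * dirac K G (h * p * h⁻¹)) ⊗ₜ[K] grp K G (h * q)

noncomputable def heisenbergMul : DH K G →ₗ[K] DH K G →ₗ[K] DH K G :=
  liftDD₂ K G fun p q p' q' =>
    (dirac K G p * lreg K G q (dirac K G p')) ⊗ₜ[K] (grp K G q * grp K G q')

noncomputable def drinfeldCounit : DH K G →ₗ[K] K :=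
  liftDD K G fun g _ => if g = 1 then 1 else 0

noncomputable def doubleAction : DH K G →ₗ[K] DH K G →ₗ[K] DH K G :=
  liftDD₂ K G fun p q p' q' =>
    (dirac K G (p' * q' * q⁻¹ * p) * dirac K G (p' * q⁻¹)) ⊗ₜ[K] grp K G (q * q' * q⁻¹)

/- `(δ_a ⋈ b)Γ(δ_p # q)` and `Γ(δ_p # q)(δ_a ⋈ b)`: of the terms indexed by `s ∈ G`, only
`s = p(b⁻¹a⁻¹b)`, resp. `s = pqa⁻¹q⁻¹`, survives. -/
noncomputable def coactionCutLeft : DH K G →ₗ[K] DH K G →ₗ[K] DH K G ⊗[K] DH K G :=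
  liftDD₂ K G fun a b p q => dd K G a (b * q) ⊗ₜ[K] dd K G (p * (b⁻¹ * a⁻¹ * b)) q

noncomputable def coactionCutRight : DH K G →ₗ[K] DH K G →ₗ[K] DH K G ⊗[K] DH K G :=
  liftDD₂ K G fun a b p q => dd K G (q * a * q⁻¹) (q * b) ⊗ₜ[K] dd K G (p * q * a⁻¹ * q⁻¹) q

/-- `mulCoaction (u ⊗ w) y = (u ⊗ w) Γ(y)`, computed from the cut `(u ⊗ 1) Γ(y)`. -/
noncomputable def mulCoaction : DH K G ⊗[K] DH K G →ₗ[K] DH K G →ₗ[K] DH K G ⊗[K] DH K G :=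
  TensorProduct.lift ((LinearMap.llcomp K _ _ _ ∘ₗ LinearMap.lTensorHom (DH K G) ∘ₗ
    heisenbergMul K G).flip ∘ₗ coactionCutLeft K G)

variable {K G}

theorem heisenbergMul_tmul (a a' : G →₀ K) (q q' : G) :
    heisenbergMul K G (a ⊗ₜ[K] grp K G q) (a' ⊗ₜ[K] grp K G q')
      = (a * lreg K G q a') ⊗ₜ[K] (grp K G q * grp K G q') := by
  induction a using Finsupp.induction_linear with
  | zero => simp
  | add f g hf hg => simp only [add_tmul, map_add, LinearMap.add_apply, hf, hg, add_mul]
  | single p c =>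
    induction a' using Finsupp.induction_linear with
    | zero => simp
    | add f g hf hg => simp only [add_tmul, map_add, hf, hg, mul_add]
    | single p' c' =>
      simp only [single_eq_smul_dirac, map_smul, Finsupp.smul_mul_smul, ← smul_tmul',
        dirac_tmul_grp, LinearMap.smul_apply, heisenbergMul, liftDD₂_dd, smul_smul, mul_comm c']

theorem drinfeldMul_dd (g h p q : G) :
    drinfeldMul K G (dd K G g h) (dd K G p q)
      = if g = h * p * h⁻¹ then dd K G g (h * q) else 0 := by
  simp [drinfeldMul, dirac_mul_dirac, ite_tmul, dirac_tmul_grp]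

theorem heisenbergMul_dd (p q p' q' : G) :
    heisenbergMul K G (dd K G p q) (dd K G p' q')
      = if p = p' * q⁻¹ then dd K G p (q * q') else 0 := by
  simp [heisenbergMul, lreg_dirac, dirac_mul_dirac, ite_tmul, grp_mul_grp, dirac_tmul_grp]

theorem drinfeldCounit_dd (g h : G) :
    drinfeldCounit K G (dd K G g h) = if g = 1 then 1 else 0 := by
  simp [drinfeldCounit]

theorem doubleAction_dd (p q p' q' : G) :
    doubleAction K G (dd K G p q) (dd K G p' q')
      = if p = q * q'⁻¹ * q⁻¹ then dd K G (p' * q⁻¹) (q * q' * q⁻¹) else 0 := by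
  simp only [doubleAction, liftDD₂_dd, dirac_mul_dirac, ite_tmul, dirac_tmul_grp]
  refine ite_congr (propext ⟨fun h => (eq_inv_mul_of_mul_eq h).trans (by group), ?_⟩) ?_
    fun _ => rfl
  · rintro rfl; group
  · rintro rfl; congr 1; group

theorem coactionCutLeft_dd (a b p q : G) :
    coactionCutLeft K G (dd K G a b) (dd K G p q)
      = dd K G a (b * q) ⊗ₜ[K] dd K G (p * (b⁻¹ * a⁻¹ * b)) q := by
  simp [coactionCutLeft]

theorem coactionCutRight_dd (a b p q : G) :
    coactionCutRight K G (dd K G a b) (dd K G p q)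
      = dd K G (q * a * q⁻¹) (q * b) ⊗ₜ[K] dd K G (p * q * a⁻¹ * q⁻¹) q := by
  simp [coactionCutRight]

theorem mulCoaction_tmul (u w y : DH K G) :
    mulCoaction K G (u ⊗ₜ w) y
      = LinearMap.lTensor (DH K G) (heisenbergMul K G w) (coactionCutLeft K G u y) := rfl

theorem doubleAction_drinfeldMul_dd (a b p q u v : G) :
    doubleAction K G (drinfeldMul K G (dd K G a b) (dd K G p q)) (dd K G u v)
      = doubleAction K G (dd K G a b) (doubleAction K G (dd K G p q) (dd K G u v)) := by
  rw [drinfeldMul_dd, doubleAction_dd p]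
  split_ifs <;> simp_all [doubleAction_dd, mul_assoc, mul_inv_eq_iff_eq_mul]

theorem doubleAction_drinfeldMul (d d' x : DH K G) :
    doubleAction K G (drinfeldMul K G d d') x = doubleAction K G d (doubleAction K G d' x) := by
  have key : (drinfeldMul K G).compr₂ (doubleAction K G)
      = (LinearMap.llcomp K _ _ _ ∘ₗ doubleAction K G).compl₂ (doubleAction K G) :=
    linearMap_ext fun a b => linearMap_ext fun p q => linearMap_ext fun u v => by
      simpa using doubleAction_drinfeldMul_dd a b p q u v
  exact congr($key d d' x)

theorem span_doubleAction_eq_top :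
    Submodule.span K {x : DH K G | ∃ d h : DH K G, doubleAction K G d h = x} = ⊤ := by
  refine eq_top_iff.2 ((ddBasis K G).span_eq.ge.trans (Submodule.span_mono ?_))
  rintro _ ⟨⟨p, q⟩, rfl⟩
  exact ⟨dd K G q⁻¹ 1, dd K G p q, by simp [doubleAction_dd]⟩

theorem counit_coactionCutLeft (g x : DH K G) :
    TensorProduct.lid K (DH K G) (LinearMap.rTensor (DH K G) (drinfeldCounit K G)
      (coactionCutLeft K G g x)) = drinfeldCounit K G g • x := by
  have key : (coactionCutLeft K G).compr₂
        ((TensorProduct.lid K (DH K G)).toLinearMap ∘ₗ LinearMap.rTensor _ (drinfeldCounit K G))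
      = LinearMap.lsmul K (DH K G) ∘ₗ drinfeldCounit K G :=
    linearMap_ext fun a b => linearMap_ext fun p q => by
      by_cases ha : a = 1 <;> simp [coactionCutLeft_dd, drinfeldCounit_dd, ha]
  exact congr($key g x)

theorem coactionCutLeft_dd_eq_finsum (g : DH K G) (p q : G) :
    coactionCutLeft K G g (dd K G p q)
      = ∑ᶠ s : G, drinfeldMul K G g (dd K G (s⁻¹ * p) q) ⊗ₜ[K] dd K G s q := by
  refine (finsum_apply_eq_of_single_dd
    (fun s => (TensorProduct.mk K _ _).flip (dd K G s q) ∘ₗ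
      (drinfeldMul K G).flip (dd K G (s⁻¹ * p) q))
    ((coactionCutLeft K G).flip (dd K G p q)) (fun a b => p * (b⁻¹ * a⁻¹ * b)) ?_ ?_ g).symm
  · intro a b s hs
    simp only [LinearMap.comp_apply, LinearMap.flip_apply, TensorProduct.mk_apply, drinfeldMul_dd]
    rw [if_neg (by rintro rfl; exact hs (by group)), zero_tmul]
  · intro a b
    simp only [LinearMap.comp_apply, LinearMap.flip_apply, TensorProduct.mk_apply, drinfeldMul_dd,
      coactionCutLeft_dd]
    rw [if_pos (by group)]

theorem coactionCutRight_dd_eq_finsum (g : DH K G) (p q : G) :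
    coactionCutRight K G g (dd K G p q)
      = ∑ᶠ s : G, drinfeldMul K G (dd K G (s⁻¹ * p) q) g ⊗ₜ[K] dd K G s q := by
  refine (finsum_apply_eq_of_single_dd
    (fun s => (TensorProduct.mk K _ _).flip (dd K G s q) ∘ₗ drinfeldMul K G (dd K G (s⁻¹ * p) q))
    ((coactionCutRight K G).flip (dd K G p q)) (fun a _ => p * q * a⁻¹ * q⁻¹) ?_ ?_ g).symm
  · intro a b s hs
    simp only [LinearMap.comp_apply, LinearMap.flip_apply, TensorProduct.mk_apply, drinfeldMul_dd]
    rw [if_neg fun h => hs ((eq_mul_inv_of_inv_mul_eq h).trans (by group)), zero_tmul]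
  · intro a b
    simp only [LinearMap.comp_apply, LinearMap.flip_apply, TensorProduct.mk_apply, drinfeldMul_dd,
      coactionCutRight_dd]
    rw [if_pos (by group)]
    congr 2; group

theorem doubleAction_heisenbergMul_dd (g h a b a' b' : G) :
    doubleAction K G (dd K G g h) (heisenbergMul K G (dd K G a b) (dd K G a' b'))
      = heisenbergMul K G (doubleAction K G (dd K G ((h * b'⁻¹ * h⁻¹)⁻¹ * g) h) (dd K G a b))
          (doubleAction K G (dd K G (h * b'⁻¹ * h⁻¹) h) (dd K G a' b')) := by
  rw [doubleAction_dd _ h a' b', if_pos rfl, doubleAction_dd _ h a b]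
  by_cases hg : g = h * (b * b')⁻¹ * h⁻¹
  · subst hg
    rw [if_pos (by group), heisenbergMul_dd, heisenbergMul_dd]
    by_cases ha : a = a' * b⁻¹
    · subst ha
      rw [if_pos rfl, if_pos (by group), doubleAction_dd, if_pos (by group)]
      congr 1; group
    · rw [if_neg ha, if_neg fun h' => ha (mul_right_cancel (h'.trans (by group))), map_zero]
  · rw [if_neg fun h' => hg ((eq_mul_of_inv_mul_eq h').trans (by group)), map_zero,
      LinearMap.zero_apply, heisenbergMul_dd]
    split_ifs
    · rw [doubleAction_dd, if_neg fun h' => hg (h'.trans (by group))]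
    · exact map_zero _

theorem doubleAction_heisenbergMul (g h : G) (x y : DH K G) :
    doubleAction K G (dd K G g h) (heisenbergMul K G x y)
      = ∑ᶠ p : G, heisenbergMul K G (doubleAction K G (dd K G (p⁻¹ * g) h) x)
          (doubleAction K G (dd K G p h) y) := by
  have key : ∀ a b, (heisenbergMul K G).flip
        (doubleAction K G (dd K G (h * b⁻¹ * h⁻¹) h) (dd K G a b)) ∘ₗ
          doubleAction K G (dd K G ((h * b⁻¹ * h⁻¹)⁻¹ * g) h)
      = doubleAction K G (dd K G g h) ∘ₗ (heisenbergMul K G).flip (dd K G a b) :=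
    fun a b => linearMap_ext fun a₁ b₁ => by
      simpa using (doubleAction_heisenbergMul_dd g h a₁ b₁ a b).symm
  refine (finsum_apply_eq_of_single_dd
    (fun p => heisenbergMul K G (doubleAction K G (dd K G (p⁻¹ * g) h) x) ∘ₗ
      doubleAction K G (dd K G p h))
    (doubleAction K G (dd K G g h) ∘ₗ heisenbergMul K G x) (fun _ b => h * b⁻¹ * h⁻¹) ?_
    (fun a b => congr($(key a b) x)) y).symm
  intro a b p hp
  simp [doubleAction_dd, hp]

theorem coactionCutLeft_heisenbergMul_dd (a b a' b' c d : G) :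
    coactionCutLeft K G (dd K G a b) (heisenbergMul K G (dd K G a' b') (dd K G c d))
      = mulCoaction K G (coactionCutLeft K G (dd K G a b) (dd K G a' b')) (dd K G c d) := by
  rw [heisenbergMul_dd, coactionCutLeft_dd, mulCoaction_tmul, coactionCutLeft_dd,
    LinearMap.lTensor_tmul, heisenbergMul_dd]
  by_cases ha : a' = c * b'⁻¹
  · subst ha
    rw [if_pos rfl, if_pos (by group), coactionCutLeft_dd]
    congr 2; group
  · rw [if_neg ha, if_neg fun h' => ha (mul_right_cancel (h'.trans (by group))), map_zero,
      tmul_zero]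

theorem coactionCutLeft_heisenbergMul (g x y : DH K G) :
    coactionCutLeft K G g (heisenbergMul K G x y)
      = mulCoaction K G (coactionCutLeft K G g x) y := by
  have key : (LinearMap.llcomp K _ _ _ ∘ₗ coactionCutLeft K G).compl₂ (heisenbergMul K G)
      = (coactionCutLeft K G).compr₂ (mulCoaction K G) :=
    linearMap_ext fun a b => linearMap_ext fun a' b' => linearMap_ext fun c d => by
      simpa using coactionCutLeft_heisenbergMul_dd a b a' b' c d
  exact congr($key g x y)

theorem coactionCutLeft_heisenbergMul_eq_sum {ι : Type} (g x y : DH K G) (s : Finset ι)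
    (u w : ι → DH K G) (hx : coactionCutLeft K G g x = ∑ k ∈ s, u k ⊗ₜ[K] w k) :
    coactionCutLeft K G g (heisenbergMul K G x y)
      = ∑ k ∈ s, LinearMap.lTensor (DH K G) (heisenbergMul K G (w k))
          (coactionCutLeft K G (u k) y) := by
  rw [coactionCutLeft_heisenbergMul, hx, map_sum, LinearMap.sum_apply]
  rfl

theorem yetterDrinfeld_dd (g h a b : G) (d' : DH K G) :
    coactionCutRight K G (drinfeldMul K G (dd K G (g * h * b * h⁻¹) h) d')
        (doubleAction K G (dd K G ((g * h * b * h⁻¹)⁻¹ * g) h) (dd K G a b))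
      = TensorProduct.map ((drinfeldMul K G).flip d')
          (doubleAction K G (dd K G (h * b⁻¹ * h⁻¹) h))
          (coactionCutLeft K G (dd K G ((h * b⁻¹ * h⁻¹)⁻¹ * g) h) (dd K G a b)) := by
  rw [doubleAction_dd, if_pos (by group), coactionCutLeft_dd, TensorProduct.map_tmul,
    LinearMap.flip_apply, doubleAction_dd, if_pos rfl]
  have key : (coactionCutRight K G).flip (dd K G (a * h⁻¹) (h * b * h⁻¹)) ∘ₗ
        drinfeldMul K G (dd K G (g * h * b * h⁻¹) h)
      = (TensorProduct.mk K _ _).flip (dd K G (a * (h⁻¹ * ((h * b⁻¹ * h⁻¹)⁻¹ * g)⁻¹ * h) * h⁻¹)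
          (h * b * h⁻¹)) ∘ₗ drinfeldMul K G (dd K G ((h * b⁻¹ * h⁻¹)⁻¹ * g) (h * b)) := by
    refine linearMap_ext fun a₁ b₁ => ?_
    simp only [LinearMap.comp_apply, LinearMap.flip_apply, TensorProduct.mk_apply, drinfeldMul_dd]
    by_cases ha : a₁ = h⁻¹ * g * h * b
    · subst ha
      rw [if_pos (by group), if_pos (by group), coactionCutRight_dd]
      congr 1 <;> congr 1 <;> group
    · rw [if_neg fun h' => ha ((eq_inv_mul_mul_of_mul_mul_inv_eq h'.symm).trans (by group)),
        if_neg fun h' => ha ((eq_inv_mul_mul_of_mul_mul_inv_eq h'.symm).trans (by group)),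
        map_zero, LinearMap.zero_apply, zero_tmul]
  exact congr($key d')

theorem yetterDrinfeld (g h : G) (d' v : DH K G) :
    ∑ᶠ p : G, coactionCutRight K G (drinfeldMul K G (dd K G p h) d')
        (doubleAction K G (dd K G (p⁻¹ * g) h) v)
      = ∑ᶠ p : G, TensorProduct.map ((drinfeldMul K G).flip d') (doubleAction K G (dd K G p h))
          (coactionCutLeft K G (dd K G (p⁻¹ * g) h) v) := by
  refine finsum_apply_eq_finsum_apply_of_single_dd
    (fun p => coactionCutRight K G (drinfeldMul K G (dd K G p h) d') ∘ₗ
      doubleAction K G (dd K G (p⁻¹ * g) h))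
    (fun p => TensorProduct.map ((drinfeldMul K G).flip d') (doubleAction K G (dd K G p h)) ∘ₗ
      coactionCutLeft K G (dd K G (p⁻¹ * g) h))
    (fun _ b => g * h * b * h⁻¹) (fun _ b => h * b⁻¹ * h⁻¹) ?_ ?_
    (fun a b => yetterDrinfeld_dd g h a b d') v
  · intro a b p hp
    simp only [LinearMap.comp_apply, doubleAction_dd]
    rw [if_neg fun h' => hp ((eq_mul_inv_of_inv_mul_eq h').trans (by group)), map_zero]
  · intro a b p hp
    simp [coactionCutLeft_dd, doubleAction_dd, hp]

end GroupDouble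

/-- Let `G` be a group, `𝓓 = K(G) ⋈ K[G]` the Drinfel'd double and
`𝓗 = K(G) # K[G]` the Heisenberg double.  The action
`(δ_p ⋈ q) · (δ_{p'} # q') = δ_{p'q'q⁻¹p} δ_{p'q⁻¹} # qq'q⁻¹`
and the coaction `Γ(δ_p # q) = ∑_{s ∈ G} (δ_{s⁻¹p} ⋈ q) ⊗ (δ_s # q)` make `K(G) # K[G]` a
(left-left) Yetter-Drinfel'd module algebra over `K(G) ⋈ K[G]`.
The coaction takes values in the completed module `M₀(𝓓 ⊗ 𝓗)`, so it is rendered by its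
left-cut and right-cut maps `Γcut g x = (g ⊗ 1)Γ(x)` and `ΓcutR g x = Γ(x)(g ⊗ 1)`, and
the comodule and Yetter-Drinfel'd conditions are stated in the correspondingly covered
form, using finite sums `∑ᶠ` over `G`. -/
theorem heisenberg_yetter_drinfeld_group_case
    (K : Type) [Field K] (G : Type) [Group G] :
    ∃ (dmul : DH K G →ₗ[K] DH K G →ₗ[K] DH K G)
      (hmul : DH K G →ₗ[K] DH K G →ₗ[K] DH K G)
      (dcounit : DH K G →ₗ[K] K)
      (act : DH K G →ₗ[K] DH K G →ₗ[K] DH K G)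
      (Γcut ΓcutR : DH K G →ₗ[K] DH K G →ₗ[K] DH K G ⊗[K] DH K G),
      -- the Drinfel'd double product `(δ_g ⋈ h)(δ_p ⋈ q) = δ_g δ_{hph⁻¹} ⋈ hq`
      (∀ g h p q : G,
        dmul (dd K G g h) (dd K G p q)
          = (dirac K G g * dirac K G (h * p * h⁻¹)) ⊗ₜ[K] grp K G (h * q)) ∧
      -- the Heisenberg double (smash) product `(a # q)(a' # q') = a(q ▶ a') # qq'`
      (∀ (a a' : G →₀ K) (q q' : G),
        hmul (a ⊗ₜ[K] grp K G q) (a' ⊗ₜ[K] grp K G q')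
          = (a * (lreg K G q) a') ⊗ₜ[K] (grp K G q * grp K G q')) ∧
      -- the counit of `𝓓`
      (∀ g h : G, dcounit (dd K G g h)
          = (haveI := Classical.dec (g = (1:G)); if g = (1:G) then (1:K) else 0)) ∧
      -- the action `(δ_p ⋈ q) · (δ_{p'} # q') = δ_{p'q'q⁻¹p} δ_{p'q⁻¹} # qq'q⁻¹`
      (∀ p q p' q' : G,
        act (dd K G p q) (dd K G p' q')
          = (dirac K G (p' * q' * q⁻¹ * p) * dirac K G (p' * q⁻¹))
              ⊗ₜ[K] grp K G (q * q' * q⁻¹)) ∧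
      -- the coaction `Γ(δ_p # q) = ∑_{s ∈ G} (δ_{s⁻¹p} ⋈ q) ⊗ (δ_s # q)`, in cut forms
      (∀ (g : DH K G) (p q : G),
        Γcut g (dd K G p q)
          = ∑ᶠ s : G, (dmul g (dd K G (s⁻¹ * p) q)) ⊗ₜ[K] (dd K G s q)) ∧
      (∀ (g : DH K G) (p q : G),
        ΓcutR g (dd K G p q)
          = ∑ᶠ s : G, (dmul (dd K G (s⁻¹ * p) q) g) ⊗ₜ[K] (dd K G s q)) ∧
      -- `𝓗` is a unital `𝓓`-module
      (∀ d d' x : DH K G, act (dmul d d') x = act d (act d' x)) ∧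
      Submodule.span K {x : DH K G | ∃ d h : DH K G, act d h = x} = ⊤ ∧
      -- `𝓗` is a `𝓓`-module algebra
      -- (w.r.t. `Δ(δ_g ⊗ h) = ∑_{p ∈ G} (δ_{p⁻¹g} ⊗ h) ⊗ (δ_p ⊗ h)`)
      (∀ (g h : G) (x y : DH K G),
        act (dd K G g h) (hmul x y)
          = ∑ᶠ p : G, hmul (act (dd K G (p⁻¹ * g) h) x) (act (dd K G p h) y)) ∧
      -- `𝓗` is a `𝓓`-comodule: counit property of the coaction, in cut form
      (∀ (g : DH K G) (x : DH K G),
        (TensorProduct.lid K (DH K G)) ((LinearMap.rTensor (DH K G) dcounit) (Γcut g x))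
          = dcounit g • x) ∧
      -- `𝓗` is a `𝓓`-comodule algebra: `(g ⊗ 1)Γ(xy) = ((g ⊗ 1)Γ(x))Γ(y)`, in cut form
      (∀ (g : DH K G) (x y : DH K G) (s : Finset ℕ) (u w : ℕ → DH K G),
        Γcut g x = ∑ k ∈ s, u k ⊗ₜ[K] w k →
        Γcut g (hmul x y)
          = ∑ k ∈ s, (LinearMap.lTensor (DH K G) (hmul (w k))) (Γcut (u k) y)) ∧
      -- the Yetter-Drinfel'd compatibility condition
      -- `(d₍₁₎ · v)₍₋₁₎ d₍₂₎ d' ⊗ (d₍₁₎ · v)₍₀₎ = d₍₁₎ v₍₋₁₎ d' ⊗ d₍₂₎ · v₍₀₎`, in cut form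
      (∀ (g h : G) (d' : DH K G) (v : DH K G),
        ∑ᶠ p : G, ΓcutR (dmul (dd K G p h) d') (act (dd K G (p⁻¹ * g) h) v)
          = ∑ᶠ p : G,
              (TensorProduct.map (dmul.flip d') (act (dd K G p h)))
                (Γcut (dd K G (p⁻¹ * g) h) v)) := by
  open GroupDouble in
  exact ⟨drinfeldMul K G, heisenbergMul K G, drinfeldCounit K G, doubleAction K G,
    coactionCutLeft K G, coactionCutRight K G, fun _ _ _ _ => liftDD₂_dd _ _ _ _ _,
    heisenbergMul_tmul, drinfeldCounit_dd, fun _ _ _ _ => liftDD₂_dd _ _ _ _ _,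
    coactionCutLeft_dd_eq_finsum, coactionCutRight_dd_eq_finsum, doubleAction_drinfeldMul,
    span_doubleAction_eq_top, doubleAction_heisenbergMul, counit_coactionCutLeft,
    fun g x y _ u w => coactionCutLeft_heisenbergMul_eq_sum g x y _ u w, yetterDrinfeld⟩
end
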